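/- arXiv:2105.10597 — 5 statements merged into one kernel-verified Lean document; each statement's English description precedes it below -/
import Mathlib

section
/- For every T > 0 there exists a constant C₀ > 0, depending only on T, the constants c₁,…,c₆, F(0,0), G(0,0), α and ∫₀ᵀ H(s) ds, such that every pair (λ^A, λ^B) of continuous nonnegative functions on [0,T] satisfying, for all t ∈ [0,T], λ^A(t) = F( α ∫₀ᵗ h₁(t−u)λ^A(u) du , (1−α) ∫₀ᵗ h₂(t−u)λ^B(u) du ) and λ^B(t) = G( (1−α) ∫₀ᵗ h₃(t−u)λ^B(u) du , α ∫₀ᵗ h₄(t−u)λ^A(u) du ), obeys sup_{t∈[0,T]} ( λ^A(t) + λ^B(t) ) ≤ C₀. -/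
/-! With `φ = λ^A + λ^B`, the bounds `F x y ≤ c₁ (x + y) + c₂` and `G x y ≤ G 0 0 + c₆ (x + y)`
together with `α h₁ λ^A + (1 - α) h₂ λ^B + (1 - α) h₃ λ^B + α h₄ λ^A ≤ H φ` give the Volterra
inequality `φ t ≤ C + K ∫₀ᵗ H (t - u) φ u du`. Its nonnegative continuous solutions are bounded by a
constant independent of `φ`: by dominated convergence pick `γ ≥ 0` with
`K ∫₀ᵀ H s e^{-γ s} ds ≤ 1/2`; at a maximum point `t₀` of `e^{-γ t} φ t`, with maximal value `N`,
the inequality reads `N ≤ C + N / 2`, so `φ t ≤ 2 C e^{γ T}`. -/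

open MeasureTheory Filter Topology Set Real

theorem tendsto_integral_mul_exp_neg_mul_atTop {H : ℝ → ℝ} {T : ℝ} (hT : 0 ≤ T)
    (hH : IntervalIntegrable H volume 0 T) :
    Tendsto (fun γ => ∫ s in (0:ℝ)..T, H s * exp (-(γ * s))) atTop (𝓝 0) := by
  have hlim : ∀ s ∈ uIoc (0:ℝ) T, Tendsto (fun γ => H s * exp (-(γ * s))) atTop (𝓝 0) := by
    intro s hs
    rw [uIoc_of_le hT] at hs
    simpa using (tendsto_exp_atBot.comp
      (tendsto_neg_atTop_atBot.comp (tendsto_id.atTop_mul_const hs.1))).const_mul (H s)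
  have hbound : ∀ γ, 0 ≤ γ → ∀ s ∈ uIoc (0:ℝ) T, ‖H s * exp (-(γ * s))‖ ≤ ‖H s‖ := by
    intro γ hγ s hs
    rw [uIoc_of_le hT] at hs
    rw [norm_mul, Real.norm_of_nonneg (exp_pos _).le]
    exact mul_le_of_le_one_right (norm_nonneg _)
      (exp_le_one_iff.2 (neg_nonpos.2 (mul_nonneg hγ hs.1.le)))
  simpa using intervalIntegral.tendsto_integral_filter_of_dominated_convergence (fun s => ‖H s‖)
    (Eventually.of_forall fun γ => hH.def'.aestronglyMeasurable.mul
      (by fun_prop : Continuous fun s => exp (-(γ * s))).aestronglyMeasurable)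
    ((eventually_ge_atTop 0).mono fun γ hγ => ae_of_all _ (hbound γ hγ)) hH.norm
    (ae_of_all _ hlim)

theorem intervalIntegrable_comp_sub_mul {k f : ℝ → ℝ} {T t : ℝ} (hk : IntegrableOn k (Icc 0 T))
    (hf : ContinuousOn f (Icc 0 T)) (ht : t ∈ Icc 0 T) :
    IntervalIntegrable (fun u => k (t - u) * f u) volume 0 t := by
  have hkt : IntervalIntegrable (fun u => k (t - u)) volume 0 t := by
    simpa using (((intervalIntegrable_iff_integrableOn_Icc_of_le ht.1).2
      (hk.mono_set (Icc_subset_Icc le_rfl ht.2))).comp_sub_left t).symm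
  exact hkt.mul_continuousOn (by rw [uIcc_of_le ht.1]; exact hf.mono (Icc_subset_Icc le_rfl ht.2))

theorem integral_comp_sub_mul_nonneg {k f : ℝ → ℝ} {T t : ℝ}
    (hk : ∀ s ∈ Icc 0 T, 0 ≤ k s) (hf : ∀ u ∈ Icc 0 T, 0 ≤ f u) (ht : t ∈ Icc 0 T) :
    0 ≤ ∫ u in (0:ℝ)..t, k (t - u) * f u :=
  intervalIntegral.integral_nonneg ht.1 fun u hu =>
    mul_nonneg (hk _ ⟨sub_nonneg.2 hu.2, by linarith [hu.1, ht.2]⟩) (hf u ⟨hu.1, hu.2.trans ht.2⟩)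

theorem integral_comp_sub_mul_exp_eq (H : ℝ → ℝ) (N γ t : ℝ) :
    ∫ u in (0:ℝ)..t, H (t - u) * (N * exp (γ * u))
      = N * exp (γ * t) * ∫ s in (0:ℝ)..t, H s * exp (-(γ * s)) := by
  have hsub := intervalIntegral.integral_comp_sub_left
    (fun s => N * exp (γ * t) * (H s * exp (-(γ * s)))) (a := 0) (b := t) t
  rw [sub_self, sub_zero] at hsub
  rw [← intervalIntegral.integral_const_mul, ← hsub]
  refine intervalIntegral.integral_congr fun u _ => ?_
  rw [show γ * u = γ * t + -(γ * (t - u)) by ring, exp_add]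
  ring

theorem integral_comp_sub_mul_le_of_le_mul_exp {H φ : ℝ → ℝ} {T N γ t : ℝ}
    (hH : IntegrableOn H (Icc 0 T)) (hHnn : ∀ s ∈ Icc 0 T, 0 ≤ H s)
    (hφ : ContinuousOn φ (Icc 0 T)) (hN : 0 ≤ N) (hφN : ∀ u ∈ Icc 0 T, φ u ≤ N * exp (γ * u))
    (ht : t ∈ Icc 0 T) :
    ∫ u in (0:ℝ)..t, H (t - u) * φ u
      ≤ N * exp (γ * t) * ∫ s in (0:ℝ)..T, H s * exp (-(γ * s)) := by
  have hexp : Continuous fun u => exp (γ * u) := by fun_prop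
  calc ∫ u in (0:ℝ)..t, H (t - u) * φ u
      ≤ ∫ u in (0:ℝ)..t, H (t - u) * (N * exp (γ * u)) :=
        intervalIntegral.integral_mono_on ht.1 (intervalIntegrable_comp_sub_mul hH hφ ht)
          (intervalIntegrable_comp_sub_mul hH (hexp.const_mul N).continuousOn ht)
          fun u hu => mul_le_mul_of_nonneg_left (hφN u ⟨hu.1, hu.2.trans ht.2⟩)
            (hHnn _ ⟨sub_nonneg.2 hu.2, by linarith [hu.1, ht.2]⟩)
    _ = N * exp (γ * t) * ∫ s in (0:ℝ)..t, H s * exp (-(γ * s)) :=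
        integral_comp_sub_mul_exp_eq H N γ t
    _ ≤ N * exp (γ * t) * ∫ s in (0:ℝ)..T, H s * exp (-(γ * s)) := by
        refine mul_le_mul_of_nonneg_left (intervalIntegral.integral_mono_interval le_rfl ht.1 ht.2
          ?_ ?_) (by positivity)
        · refine (ae_restrict_mem measurableSet_Ioc).mono fun s hs => ?_
          exact mul_nonneg (hHnn s (Ioc_subset_Icc_self hs)) (exp_pos _).le
        · exact ((intervalIntegrable_iff_integrableOn_Icc_of_le (ht.1.trans ht.2)).2
            hH).mul_continuousOn (by fun_prop)

theorem exists_bound_of_le_add_mul_integral_comp_sub_mul {H : ℝ → ℝ} {T C K : ℝ} (hT : 0 ≤ T)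
    (hH : IntegrableOn H (Icc 0 T)) (hHnn : ∀ s ∈ Icc 0 T, 0 ≤ H s) (hC : 0 ≤ C) (hK : 0 ≤ K) :
    ∃ B, ∀ φ : ℝ → ℝ, ContinuousOn φ (Icc 0 T) → (∀ t ∈ Icc 0 T, 0 ≤ φ t) →
      (∀ t ∈ Icc 0 T, φ t ≤ C + K * ∫ u in (0:ℝ)..t, H (t - u) * φ u) →
      ∀ t ∈ Icc 0 T, φ t ≤ B := by
  obtain ⟨γ, hγ, hγ0⟩ : ∃ γ, K * (∫ s in (0:ℝ)..T, H s * exp (-(γ * s))) ≤ 1 / 2 ∧ 0 ≤ γ := by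
    have hlim := (tendsto_integral_mul_exp_neg_mul_atTop hT
      ((intervalIntegrable_iff_integrableOn_Icc_of_le hT).2 hH)).const_mul K
    rw [mul_zero] at hlim
    exact ((hlim.eventually (ge_mem_nhds (by norm_num))).and (eventually_ge_atTop 0)).exists
  refine ⟨2 * C * exp (γ * T), fun φ hφ hφnn hle t ht => ?_⟩
  obtain ⟨t₀, ht₀, hmax⟩ := isCompact_Icc.exists_isMaxOn (f := fun u => exp (-(γ * u)) * φ u)
    ⟨t, ht⟩ ((by fun_prop : Continuous fun u => exp (-(γ * u))).continuousOn.mul hφ)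
  set N := exp (-(γ * t₀)) * φ t₀
  have hφN : ∀ u ∈ Icc 0 T, φ u ≤ N * exp (γ * u) := fun u hu => by
    calc φ u = exp (-(γ * u)) * φ u * exp (γ * u) := by
          rw [mul_right_comm, ← exp_add, neg_add_cancel, exp_zero, one_mul]
      _ ≤ N * exp (γ * u) := mul_le_mul_of_nonneg_right (hmax hu) (exp_pos _).le
  have hN : N ≤ 2 * C := by
    have hN0 : 0 ≤ N := mul_nonneg (exp_pos _).le (hφnn t₀ ht₀)
    have hφt₀ : φ t₀ ≤ C + N * exp (γ * t₀) * (1 / 2) :=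
      calc φ t₀ ≤ C + K * ∫ u in (0:ℝ)..t₀, H (t₀ - u) * φ u := hle t₀ ht₀
        _ ≤ C + K * (N * exp (γ * t₀) * ∫ s in (0:ℝ)..T, H s * exp (-(γ * s))) := by
          gcongr; exact integral_comp_sub_mul_le_of_le_mul_exp hH hHnn hφ hN0 hφN ht₀
        _ = C + N * exp (γ * t₀) * (K * ∫ s in (0:ℝ)..T, H s * exp (-(γ * s))) := by ring
        _ ≤ C + N * exp (γ * t₀) * (1 / 2) := by gcongr
    have hexp : exp (-(γ * t₀)) * exp (γ * t₀) = 1 := by rw [← exp_add, neg_add_cancel, exp_zero]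
    have : N ≤ C + N / 2 :=
      calc N ≤ exp (-(γ * t₀)) * (C + N * exp (γ * t₀) * (1 / 2)) :=
            mul_le_mul_of_nonneg_left hφt₀ (exp_pos _).le
        _ = exp (-(γ * t₀)) * C + N / 2 := by linear_combination (N / 2) * hexp
        _ ≤ C + N / 2 := by
          gcongr
          exact mul_le_of_le_one_left hC (exp_le_one_iff.2 (neg_nonpos.2 (mul_nonneg hγ0 ht₀.1)))
    linarith
  calc φ t ≤ N * exp (γ * t) := hφN t ht
    _ ≤ 2 * C * exp (γ * T) := mul_le_mul hN (exp_le_exp.2 (mul_le_mul_of_nonneg_left ht.2 hγ0))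
        (exp_pos _).le (by positivity)

theorem Measurable.integrableOn_of_const_mul_le {α : Type*} [MeasurableSpace α] {μ : Measure α}
    {s : Set α} {h H : α → ℝ} {c : ℝ} (hs : MeasurableSet s) (hh : Measurable h) (hc : 0 < c)
    (hH : IntegrableOn H s μ)
    (hle : ∀ x ∈ s, 0 ≤ h x ∧ c * h x ≤ H x) : IntegrableOn h s μ := by
  refine (hH.div_const c).mono' hh.aestronglyMeasurable.restrict
    (ae_restrict_of_forall_mem hs fun x hx => ?_)
  rw [Real.norm_of_nonneg (hle x hx).1, le_div_iff₀ hc, mul_comm]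
  exact (hle x hx).2

theorem integrableOn_of_integrableOn_weighted_sum {k₁ k₂ k₃ k₄ : ℝ → ℝ} {s : Set ℝ} {a b : ℝ}
    (hs : MeasurableSet s) (ha : 0 < a) (hb : 0 < b)
    (hm : Measurable k₁ ∧ Measurable k₂ ∧ Measurable k₃ ∧ Measurable k₄)
    (hk : ∀ x ∈ s, 0 ≤ k₁ x ∧ 0 ≤ k₂ x ∧ 0 ≤ k₃ x ∧ 0 ≤ k₄ x)
    (hK : IntegrableOn (fun x => a * k₁ x + b * k₂ x + b * k₃ x + a * k₄ x) s) :
    IntegrableOn k₁ s ∧ IntegrableOn k₂ s ∧ IntegrableOn k₃ s ∧ IntegrableOn k₄ s := by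
  obtain ⟨hm₁, hm₂, hm₃, hm₄⟩ := hm
  have hle : ∀ x ∈ s, a * k₁ x ≤ a * k₁ x + b * k₂ x + b * k₃ x + a * k₄ x ∧
      b * k₂ x ≤ a * k₁ x + b * k₂ x + b * k₃ x + a * k₄ x ∧
      b * k₃ x ≤ a * k₁ x + b * k₂ x + b * k₃ x + a * k₄ x ∧
      a * k₄ x ≤ a * k₁ x + b * k₂ x + b * k₃ x + a * k₄ x := by
    intro x hx
    obtain ⟨p₁, p₂, p₃, p₄⟩ := hk x hx
    have := mul_nonneg ha.le p₁; have := mul_nonneg hb.le p₂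
    have := mul_nonneg hb.le p₃; have := mul_nonneg ha.le p₄
    exact ⟨by linarith, by linarith, by linarith, by linarith⟩
  exact ⟨hm₁.integrableOn_of_const_mul_le hs ha hK fun x hx => ⟨(hk x hx).1, (hle x hx).1⟩,
    hm₂.integrableOn_of_const_mul_le hs hb hK fun x hx => ⟨(hk x hx).2.1, (hle x hx).2.1⟩,
    hm₃.integrableOn_of_const_mul_le hs hb hK fun x hx => ⟨(hk x hx).2.2.1, (hle x hx).2.2.1⟩,
    hm₄.integrableOn_of_const_mul_le hs ha hK fun x hx => ⟨(hk x hx).2.2.2, (hle x hx).2.2.2⟩⟩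

theorem integral_comp_sub_mul_sum_le {k₁ k₂ k₃ k₄ f g : ℝ → ℝ} {T t a b : ℝ}
    (ha : 0 < a) (hb : 0 < b)
    (hm : Measurable k₁ ∧ Measurable k₂ ∧ Measurable k₃ ∧ Measurable k₄)
    (hk : ∀ s ∈ Icc 0 T, 0 ≤ k₁ s ∧ 0 ≤ k₂ s ∧ 0 ≤ k₃ s ∧ 0 ≤ k₄ s)
    (hK : IntegrableOn (fun s => a * k₁ s + b * k₂ s + b * k₃ s + a * k₄ s) (Icc 0 T))
    (hf : ContinuousOn f (Icc 0 T)) (hg : ContinuousOn g (Icc 0 T))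
    (hfg : ∀ u ∈ Icc 0 T, 0 ≤ f u ∧ 0 ≤ g u) (ht : t ∈ Icc 0 T) :
    a * (∫ u in (0:ℝ)..t, k₁ (t - u) * f u) + b * (∫ u in (0:ℝ)..t, k₂ (t - u) * g u)
      + b * (∫ u in (0:ℝ)..t, k₃ (t - u) * g u) + a * (∫ u in (0:ℝ)..t, k₄ (t - u) * f u)
      ≤ ∫ u in (0:ℝ)..t, (a * k₁ (t - u) + b * k₂ (t - u) + b * k₃ (t - u) + a * k₄ (t - u))
          * (f u + g u) := by
  obtain ⟨hk₁, hk₂, hk₃, hk₄⟩ :=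
    integrableOn_of_integrableOn_weighted_sum measurableSet_Icc ha hb hm hk hK
  have i₁ := (intervalIntegrable_comp_sub_mul hk₁ hf ht).const_mul a
  have i₂ := (intervalIntegrable_comp_sub_mul hk₂ hg ht).const_mul b
  have i₃ := (intervalIntegrable_comp_sub_mul hk₃ hg ht).const_mul b
  have i₄ := (intervalIntegrable_comp_sub_mul hk₄ hf ht).const_mul a
  have iK := intervalIntegrable_comp_sub_mul hK (hf.add hg) ht
  simp only [← intervalIntegral.integral_const_mul]
  rw [← intervalIntegral.integral_add i₁ i₂, ← intervalIntegral.integral_add (i₁.add i₂) i₃,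
    ← intervalIntegral.integral_add ((i₁.add i₂).add i₃) i₄]
  refine intervalIntegral.integral_mono_on ht.1 (((i₁.add i₂).add i₃).add i₄) iK fun u hu => ?_
  obtain ⟨p₁, p₂, p₃, p₄⟩ := hk (t - u) ⟨sub_nonneg.2 hu.2, by linarith [hu.1, ht.2]⟩
  obtain ⟨q₁, q₂⟩ := hfg u ⟨hu.1, hu.2.trans ht.2⟩
  linarith [mul_nonneg (mul_nonneg ha.le p₁) q₂, mul_nonneg (mul_nonneg hb.le p₂) q₁,
    mul_nonneg (mul_nonneg hb.le p₃) q₁, mul_nonneg (mul_nonneg ha.le p₄) q₂]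

theorem add_le_of_le_linear_of_lipschitz {F G : ℝ → ℝ → ℝ} {c₁ c₂ c₆ X₁ X₂ X₃ X₄ x y : ℝ}
    (hFbound : ∀ x y, 0 ≤ x → 0 ≤ y → F x y ≤ c₁ * (x + y) + c₂)
    (hGlip : ∀ x x' y y', 0 ≤ x → 0 ≤ x' → 0 ≤ y → 0 ≤ y' →
      |G x y - G x' y'| ≤ c₆ * (|x - x'| + |y - y'|))
    (h₁ : 0 ≤ X₁) (h₂ : 0 ≤ X₂) (h₃ : 0 ≤ X₃) (h₄ : 0 ≤ X₄)
    (hx : x = F X₁ X₂) (hy : y = G X₃ X₄) :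
    x + y ≤ c₂ + G 0 0 + max c₁ c₆ * (X₁ + X₂ + X₃ + X₄) := by
  have hFx : x ≤ c₁ * (X₁ + X₂) + c₂ := hx ▸ hFbound X₁ X₂ h₁ h₂
  have hGy : y ≤ G 0 0 + c₆ * (X₃ + X₄) := by
    have := hGlip X₃ 0 X₄ 0 h₃ le_rfl h₄ le_rfl
    rw [sub_zero, sub_zero, abs_of_nonneg h₃, abs_of_nonneg h₄] at this
    linarith [(abs_le.1 this).2]
  linarith [mul_le_mul_of_nonneg_right (le_max_left c₁ c₆) (add_nonneg h₁ h₂),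
    mul_le_mul_of_nonneg_right (le_max_right c₁ c₆) (add_nonneg h₃ h₄)]

theorem stmt1_general
    (α : ℝ) (hα : α ∈ Set.Ioo (0:ℝ) 1)
    (h₁ h₂ h₃ h₄ : ℝ → ℝ)
    (hmeas : Measurable h₁ ∧ Measurable h₂ ∧ Measurable h₃ ∧ Measurable h₄)
    (hpos : ∀ u, 0 ≤ u → 0 ≤ h₁ u ∧ 0 ≤ h₂ u ∧ 0 ≤ h₃ u ∧ 0 ≤ h₄ u)
    (hH : ∀ T > (0:ℝ), IntegrableOn
      (fun t => α * h₁ t + (1 - α) * h₂ t + (1 - α) * h₃ t + α * h₄ t)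
      (Set.Icc 0 T))
    (F G : ℝ → ℝ → ℝ)
    (c₁ c₂ c₃ c₄ c₅ c₆ : ℝ)
    (hc : 0 ≤ c₁ ∧ 0 ≤ c₂ ∧ 0 ≤ c₃ ∧ 0 ≤ c₄ ∧ 0 ≤ c₅ ∧ 0 ≤ c₆)
    (hGpos : ∀ x y, 0 ≤ x → 0 ≤ y → 0 ≤ G x y)
    (hFbound : ∀ x y, 0 ≤ x → 0 ≤ y → F x y ≤ c₁ * (x + y) + c₂)
    (hGlip : ∀ x x' y y', 0 ≤ x → 0 ≤ x' → 0 ≤ y → 0 ≤ y' →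
      |G x y - G x' y'| ≤ c₆ * (|x - x'| + |y - y'|))
    (T : ℝ) (hT : 0 < T) :
    ∃ C₀ : ℝ, 0 < C₀ ∧
      ∀ lA lB : ℝ → ℝ,
        ContinuousOn lA (Set.Icc 0 T) → ContinuousOn lB (Set.Icc 0 T) →
        (∀ t ∈ Set.Icc 0 T, 0 ≤ lA t ∧ 0 ≤ lB t) →
        (∀ t ∈ Set.Icc 0 T,
          lA t = F (α * ∫ u in (0:ℝ)..t, h₁ (t - u) * lA u)
            ((1 - α) * ∫ u in (0:ℝ)..t, h₂ (t - u) * lB u)) →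
        (∀ t ∈ Set.Icc 0 T,
          lB t = G ((1 - α) * ∫ u in (0:ℝ)..t, h₃ (t - u) * lB u)
            (α * ∫ u in (0:ℝ)..t, h₄ (t - u) * lA u)) →
        ∀ t ∈ Set.Icc 0 T, lA t + lB t ≤ C₀ := by
  obtain ⟨hα₀, hα₁⟩ := hα
  obtain ⟨hc₁, hc₂, -, -, -, -⟩ := hc
  have hβ : 0 < 1 - α := sub_pos.2 hα₁
  have hk : ∀ s ∈ Icc 0 T, 0 ≤ h₁ s ∧ 0 ≤ h₂ s ∧ 0 ≤ h₃ s ∧ 0 ≤ h₄ s := fun s hs => hpos s hs.1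
  have hHnn : ∀ s ∈ Icc 0 T, 0 ≤ α * h₁ s + (1 - α) * h₂ s + (1 - α) * h₃ s + α * h₄ s := by
    intro s hs
    obtain ⟨p₁, p₂, p₃, p₄⟩ := hk s hs
    positivity
  obtain ⟨B, hB⟩ := exists_bound_of_le_add_mul_integral_comp_sub_mul hT.le (hH T hT) hHnn
    (add_nonneg hc₂ (hGpos 0 0 le_rfl le_rfl)) (le_max_of_le_left hc₁)
  refine ⟨max B 0 + 1, by positivity, fun lA lB hcA hcB hl hA hB' t ht => ?_⟩
  refine (hB _ (hcA.add hcB) (fun t ht => add_nonneg (hl t ht).1 (hl t ht).2) (fun t ht => ?_)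
    t ht).trans (by linarith [le_max_left B 0])
  have hX₁ := mul_nonneg hα₀.le
    (integral_comp_sub_mul_nonneg (fun s hs => (hk s hs).1) (fun u hu => (hl u hu).1) ht)
  have hX₂ := mul_nonneg hβ.le
    (integral_comp_sub_mul_nonneg (fun s hs => (hk s hs).2.1) (fun u hu => (hl u hu).2) ht)
  have hX₃ := mul_nonneg hβ.le
    (integral_comp_sub_mul_nonneg (fun s hs => (hk s hs).2.2.1) (fun u hu => (hl u hu).2) ht)
  have hX₄ := mul_nonneg hα₀.le
    (integral_comp_sub_mul_nonneg (fun s hs => (hk s hs).2.2.2) (fun u hu => (hl u hu).1) ht)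
  refine (add_le_of_le_linear_of_lipschitz hFbound hGlip hX₁ hX₂ hX₃ hX₄ (hA t ht)
    (hB' t ht)).trans ?_
  gcongr
  exact integral_comp_sub_mul_sum_le hα₀ hβ hmeas hk (hH T hT) hcA hcB hl ht

/-- A priori bound: for every `T > 0` there is a constant `C₀ > 0` bounding
`λ^A + λ^B` on `[0,T]`, uniformly over all continuous nonnegative solutions of
the mean-field intensity equations on `[0,T]`. -/
theorem stmt1
    (α : ℝ) (hα : α ∈ Set.Ioo (0:ℝ) 1)
    (h₁ h₂ h₃ h₄ : ℝ → ℝ)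
    (hmeas : Measurable h₁ ∧ Measurable h₂ ∧ Measurable h₃ ∧ Measurable h₄)
    (hpos : ∀ u, 0 ≤ u → 0 ≤ h₁ u ∧ 0 ≤ h₂ u ∧ 0 ≤ h₃ u ∧ 0 ≤ h₄ u)
    (hH : ∀ T > (0:ℝ), IntegrableOn
      (fun t => α * h₁ t + (1 - α) * h₂ t + (1 - α) * h₃ t + α * h₄ t)
      (Set.Icc 0 T))
    (F G : ℝ → ℝ → ℝ)
    (c₁ c₂ c₃ c₄ c₅ c₆ : ℝ)
    (hc : 0 ≤ c₁ ∧ 0 ≤ c₂ ∧ 0 ≤ c₃ ∧ 0 ≤ c₄ ∧ 0 ≤ c₅ ∧ 0 ≤ c₆)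
    (hFpos : ∀ x y, 0 ≤ x → 0 ≤ y → 0 ≤ F x y)
    (hGpos : ∀ x y, 0 ≤ x → 0 ≤ y → 0 ≤ G x y)
    (hFbound : ∀ x y, 0 ≤ x → 0 ≤ y → F x y ≤ c₁ * (x + y) + c₂)
    (hFlipx : ∀ x x' y, 0 ≤ x → 0 ≤ x' → 0 ≤ y →
      |F x y - F x' y| ≤ c₃ * |x - x'|)
    (hFlipy : ∀ x y y', 0 ≤ x → 0 ≤ y → 0 ≤ y' →
      |F x y - F x y'| ≤ (c₄ * x + c₅) * |y - y'|)
    (hGlip : ∀ x x' y y', 0 ≤ x → 0 ≤ x' → 0 ≤ y → 0 ≤ y' →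
      |G x y - G x' y'| ≤ c₆ * (|x - x'| + |y - y'|))
    (T : ℝ) (hT : 0 < T) :
    ∃ C₀ : ℝ, 0 < C₀ ∧
      ∀ lA lB : ℝ → ℝ,
        ContinuousOn lA (Set.Icc 0 T) → ContinuousOn lB (Set.Icc 0 T) →
        (∀ t ∈ Set.Icc 0 T, 0 ≤ lA t ∧ 0 ≤ lB t) →
        (∀ t ∈ Set.Icc 0 T,
          lA t = F (α * ∫ u in (0:ℝ)..t, h₁ (t - u) * lA u)
            ((1 - α) * ∫ u in (0:ℝ)..t, h₂ (t - u) * lB u)) →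
        (∀ t ∈ Set.Icc 0 T,
          lB t = G ((1 - α) * ∫ u in (0:ℝ)..t, h₃ (t - u) * lB u)
            (α * ∫ u in (0:ℝ)..t, h₄ (t - u) * lA u)) →
        ∀ t ∈ Set.Icc 0 T, lA t + lB t ≤ C₀ :=
  stmt1_general α hα h₁ h₂ h₃ h₄ hmeas hpos hH F G c₁ c₂ c₃ c₄ c₅ c₆ hc hGpos hFbound hGlip T hT
end

section
/- Suppose κ₂ = κ₄ = 0 (fully decoupled case). Then for the general mean-field system: if ‖Φ_A‖_L · κ₁ < 1 then sup_{t≥0} λ^A(t) < ∞, and if ‖Φ_B‖_L · κ₃ < 1 then sup_{t≥0} λ^B(t) < ∞. Moreover, for the linear mean-field system: (1) if κ₁ < 1 then λ^A(t) → μ_A/(1−κ₁) as t → ∞, and if κ₃ < 1 then λ^B(t) → μ_B/(1−κ₃) as t → ∞; (2) if κ₁ > 1 and μ_A > 0 then λ^A(t) → +∞ as t → ∞, and if κ₃ > 1 and μ_B > 0 then λ^B(t) → +∞ as t → ∞. -/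
open MeasureTheory Filter Topology Set
open scoped ENNReal

/-- Convolution term `∫₀ᵗ h(t-u) f(u) du`. -/
noncomputable def convK (h f : ℝ → ℝ) (t : ℝ) : ℝ :=
  ∫ u in (0:ℝ)..t, h (t - u) * f u

/-- `L¹` norm on `[0,∞)` of a kernel. -/
noncomputable def l1 (h : ℝ → ℝ) : ℝ :=
  ∫ s in Set.Ioi (0:ℝ), h s

/-- A nonnegative measurable kernel with finite `L¹` norm on `[0,∞)`. -/
def KernelL1 (h : ℝ → ℝ) : Prop :=
  Measurable h ∧ (∀ u, 0 ≤ u → 0 ≤ h u) ∧ IntegrableOn h (Set.Ioi 0)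

/-- A nonnegative integrable kernel vanishing at infinity. -/
def KernelOK (h : ℝ → ℝ) : Prop :=
  KernelL1 h ∧ Tendsto h atTop (𝓝 0)

/-- Properties of the inhibition kernel `Φ_{B→A}`. -/
def InhibOK (Φ : ℝ → ℝ) : Prop :=
  (∃ K, 0 ≤ K ∧ ∀ x y, 0 ≤ x → 0 ≤ y → |Φ x - Φ y| ≤ K * |x - y|) ∧
  AntitoneOn Φ (Set.Ici 0) ∧ Φ 0 = 1 ∧
  (∀ x, 0 ≤ x → 0 ≤ Φ x ∧ Φ x ≤ 1) ∧
  Tendsto Φ atTop (𝓝 0)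

/-- Properties of the feedback kernel `Φ_{A→B}`. -/
def FeedOK (Φ : ℝ → ℝ) : Prop :=
  (∃ K, 0 ≤ K ∧ ∀ x y, 0 ≤ x → 0 ≤ y → |Φ x - Φ y| ≤ K * |x - y|) ∧
  MonotoneOn Φ (Set.Ici 0) ∧ Φ 0 = 0 ∧
  (∀ x, 0 ≤ x → 0 ≤ Φ x) ∧
  Tendsto Φ atTop atTop

/-- The general mean-field system of intensities. -/
def IsGenSys (α : ℝ) (h₁ h₂ h₃ h₄ ΦA ΦB ΦBA ΦAB lA lB : ℝ → ℝ) : Prop :=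
  Continuous lA ∧ Continuous lB ∧ (∀ t, 0 ≤ lA t) ∧ (∀ t, 0 ≤ lB t) ∧
  (∀ t, 0 ≤ t →
    lA t = ΦA (α * convK h₁ lA t) * ΦBA ((1 - α) * convK h₂ lB t)) ∧
  (∀ t, 0 ≤ t →
    lB t = ΦB ((1 - α) * convK h₃ lB t) + ΦAB (α * convK h₄ lA t))

/-- The linear mean-field system: `Φ_A(x) = μ_A + x` and `Φ_B(x) = μ_B + x`. -/
def IsLinSys (α : ℝ) (h₁ h₂ h₃ h₄ ΦBA ΦAB : ℝ → ℝ) (μA μB : ℝ)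
    (lA lB : ℝ → ℝ) : Prop :=
  IsGenSys α h₁ h₂ h₃ h₄ (fun x => μA + x) (fun x => μB + x) ΦBA ΦAB lA lB

/-- `limsup_{t→∞} f(t)` with values in `[0,∞]`. -/
noncomputable def elimsup (f : ℝ → ℝ) : ℝ≥0∞ :=
  Filter.limsup (fun t => ENNReal.ofReal (f t)) Filter.atTop

/-- `liminf_{t→∞} f(t)` with values in `[0,∞]`. -/
noncomputable def eliminf (f : ℝ → ℝ) : ℝ≥0∞ :=
  Filter.liminf (fun t => ENNReal.ofReal (f t)) Filter.atTop

/-- The domain `I_{κ₁,κ₂} = {x ≥ 0 : κ₁ Φ_{B→A}(κ₂ x) < 1}`. -/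
def Idom (κ₁ κ₂ : ℝ) (ΦBA : ℝ → ℝ) : Set ℝ :=
  {x : ℝ | 0 ≤ x ∧ κ₁ * ΦBA (κ₂ * x) < 1}

/-- `Ψ₁(x) = μ_A Φ_{B→A}(κ₂x)/(1 - κ₁Φ_{B→A}(κ₂x))`. -/
noncomputable def Psi1 (μA κ₁ κ₂ : ℝ) (ΦBA : ℝ → ℝ) (x : ℝ) : ℝ :=
  μA * ΦBA (κ₂ * x) / (1 - κ₁ * ΦBA (κ₂ * x))

/-- `Ψ₂(x) = (μ_B + Φ_{A→B}(κ₄x))/(1-κ₃)`. -/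
noncomputable def Psi2 (μB κ₃ κ₄ : ℝ) (ΦAB : ℝ → ℝ) (x : ℝ) : ℝ :=
  (μB + ΦAB (κ₄ * x)) / (1 - κ₃)

/-- The fixed-point map `Φ = Ψ₂ ∘ Ψ₁`. -/
noncomputable def PhiMap (μA μB κ₁ κ₂ κ₃ κ₄ : ℝ) (ΦBA ΦAB : ℝ → ℝ) (x : ℝ) : ℝ :=
  Psi2 μB κ₃ κ₄ ΦAB (Psi1 μA κ₁ κ₂ ΦBA x)

/-- The set `U_Φ` of admissible pairs `(u,v)`. -/
def UPhi (μA μB κ₁ κ₂ κ₃ κ₄ : ℝ) (ΦBA ΦAB : ℝ → ℝ) (ℓ : ℝ) : Set (ℝ × ℝ) :=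
  {p : ℝ × ℝ | p.1 ∈ Idom κ₁ κ₂ ΦBA ∧ p.2 ∈ Idom κ₁ κ₂ ΦBA ∧
    PhiMap μA μB κ₁ κ₂ κ₃ κ₄ ΦBA ΦAB p.2 ≤ p.1 ∧ p.1 ≤ ℓ ∧ ℓ ≤ p.2 ∧
    p.2 ≤ PhiMap μA μB κ₁ κ₂ κ₃ κ₄ ΦBA ΦAB p.1 ∧ μB / (1 - κ₃) ≤ p.1}

/-!
With `κ₂ = κ₄ = 0` the kernels `h₂` and `h₄` vanish a.e. on `[0, ∞)`, so the cross terms drop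
out and each intensity solves a scalar Volterra equation `λ = Φ(k ⋆ λ)` with `‖k‖₁ = κ`.
If `Φ` is `L`-Lipschitz, evaluating at a maximiser `t₀` of `λ` on `[0, t]` gives
`λ(t₀) ≤ Φ(0) + L‖k‖₁ λ(t₀)`, a bound on `λ` as soon as `L‖k‖₁ < 1`; for `Φ(x) = μ + x` this is
the upper bound `μ / (1 - κ)`. Conversely, iterating `λ = μ + k ⋆ λ` over windows of length `A`
gives `λ(t) ≥ μ ∑_{i<n} I_A^i` for `t ≥ nA`, where `I_A = ∫₀^A k`. Letting `n → ∞` and then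
`A → ∞` yields the matching lower bound when `κ < 1`, and divergence when `κ > 1`.
-/

theorem intervalIntegrable_kernel_mul {k lam : ℝ → ℝ} (hki : IntegrableOn k (Ioi 0))
    (hlam : Continuous lam) {a b t : ℝ} (hab : a ≤ b) (hbt : b ≤ t) :
    IntervalIntegrable (fun u => k (t - u) * lam u) volume a b := by
  have hk : IntervalIntegrable k volume (t - b) (t - a) := by
    rw [intervalIntegrable_iff_integrableOn_Ioc_of_le (by linarith)]
    exact hki.mono_set fun s hs => (sub_nonneg.2 hbt).trans_lt hs.1
  simpa using (hk.symm.comp_sub_left t).mul_continuousOn hlam.continuousOn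

theorem convK_nonneg {k lam : ℝ → ℝ} (hk0 : ∀ u, 0 ≤ u → 0 ≤ k u) (hlam0 : ∀ t, 0 ≤ lam t)
    {t : ℝ} (ht : 0 ≤ t) : 0 ≤ convK k lam t :=
  intervalIntegral.integral_nonneg ht fun u hu => mul_nonneg (hk0 _ (sub_nonneg.2 hu.2)) (hlam0 u)

theorem convK_const_mul_left (c : ℝ) (h f : ℝ → ℝ) (t : ℝ) :
    convK (fun s => c * h s) f t = c * convK h f t := by
  simp only [convK, mul_assoc, intervalIntegral.integral_const_mul]

theorem l1_const_mul (c : ℝ) (h : ℝ → ℝ) : l1 (fun s => c * h s) = c * l1 h :=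
  integral_const_mul c h

theorem intervalIntegral_le_l1 {k : ℝ → ℝ} (hk0 : ∀ u, 0 ≤ u → 0 ≤ k u)
    (hki : IntegrableOn k (Ioi 0)) {A : ℝ} (hA : 0 ≤ A) : ∫ s in (0:ℝ)..A, k s ≤ l1 k := by
  rw [intervalIntegral.integral_of_le hA, l1]
  exact setIntegral_mono_set hki
    ((ae_restrict_iff' measurableSet_Ioi).2 (ae_of_all _ fun s hs => hk0 s (le_of_lt hs)))
    (Ioc_subset_Ioi_self.eventuallyLE)

theorem convK_le_mul_l1 {k lam : ℝ → ℝ} (hk0 : ∀ u, 0 ≤ u → 0 ≤ k u)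
    (hki : IntegrableOn k (Ioi 0)) (hlam : Continuous lam) {M t : ℝ} (hM : 0 ≤ M) (ht : 0 ≤ t)
    (hle : ∀ u ∈ Icc 0 t, lam u ≤ M) : convK k lam t ≤ M * l1 k :=
  calc convK k lam t ≤ ∫ u in (0:ℝ)..t, k (t - u) * M :=
        intervalIntegral.integral_mono_on ht (intervalIntegrable_kernel_mul hki hlam ht le_rfl)
          (intervalIntegrable_kernel_mul hki continuous_const ht le_rfl)
          fun u hu => mul_le_mul_of_nonneg_left (hle u hu) (hk0 _ (sub_nonneg.2 hu.2))
    _ = M * ∫ s in (0:ℝ)..t, k s := by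
        rw [intervalIntegral.integral_mul_const, intervalIntegral.integral_comp_sub_left k t,
          sub_self, sub_zero, mul_comm]
    _ ≤ M * l1 k := mul_le_mul_of_nonneg_left (intervalIntegral_le_l1 hk0 hki ht) hM

theorem mul_intervalIntegral_le_convK {k lam : ℝ → ℝ} (hk0 : ∀ u, 0 ≤ u → 0 ≤ k u)
    (hki : IntegrableOn k (Ioi 0)) (hlam : Continuous lam) (hlam0 : ∀ t, 0 ≤ lam t)
    {m A t : ℝ} (hA : 0 ≤ A) (hAt : A ≤ t) (hle : ∀ u ∈ Icc (t - A) t, m ≤ lam u) :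
    m * ∫ s in (0:ℝ)..A, k s ≤ convK k lam t := by
  have hrecent : m * ∫ s in (0:ℝ)..A, k s ≤ ∫ u in (t - A)..t, k (t - u) * lam u :=
    calc m * ∫ s in (0:ℝ)..A, k s = ∫ u in (t - A)..t, k (t - u) * m := by
          rw [intervalIntegral.integral_mul_const, intervalIntegral.integral_comp_sub_left k t,
            sub_self, sub_sub_cancel, mul_comm]
      _ ≤ ∫ u in (t - A)..t, k (t - u) * lam u :=
          intervalIntegral.integral_mono_on (by linarith)
            (intervalIntegrable_kernel_mul hki continuous_const (by linarith) le_rfl)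
            (intervalIntegrable_kernel_mul hki hlam (by linarith) le_rfl)
            fun u hu => mul_le_mul_of_nonneg_left (hle u hu) (hk0 _ (sub_nonneg.2 hu.2))
  have hpast : 0 ≤ ∫ u in (0:ℝ)..(t - A), k (t - u) * lam u :=
    intervalIntegral.integral_nonneg (by linarith)
      fun u hu => mul_nonneg (hk0 _ (by linarith [hu.2])) (hlam0 u)
  rw [convK, ← intervalIntegral.integral_add_adjacent_intervals (b := t - A)
    (intervalIntegrable_kernel_mul hki hlam (by linarith) (by linarith))
    (intervalIntegrable_kernel_mul hki hlam (by linarith) le_rfl)]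
  linarith

theorem le_div_of_le_add_mul_convK {k lam : ℝ → ℝ} (hk0 : ∀ u, 0 ≤ u → 0 ≤ k u)
    (hki : IntegrableOn k (Ioi 0)) (hlam : Continuous lam) (hlam0 : ∀ t, 0 ≤ lam t)
    {c L : ℝ} (hL : 0 ≤ L) (hLk : L * l1 k < 1)
    (hle : ∀ t, 0 ≤ t → lam t ≤ c + L * convK k lam t) {t : ℝ} (ht : 0 ≤ t) :
    lam t ≤ c / (1 - L * l1 k) := by
  obtain ⟨t₀, ht₀, hmax⟩ :=
    isCompact_Icc.exists_isMaxOn (nonempty_Icc.2 ht) hlam.continuousOn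
  have hconv : convK k lam t₀ ≤ lam t₀ * l1 k :=
    convK_le_mul_l1 hk0 hki hlam (hlam0 t₀) ht₀.1 fun u hu => hmax ⟨hu.1, hu.2.trans ht₀.2⟩
  have hmax_le : lam t₀ * (1 - L * l1 k) ≤ c := by
    nlinarith [hle t₀ ht₀.1, mul_le_mul_of_nonneg_left hconv hL]
  calc lam t ≤ lam t₀ := hmax ⟨ht, le_rfl⟩
    _ ≤ c / (1 - L * l1 k) := by rwa [le_div_iff₀ (by linarith)]

theorem mul_geom_sum_le_of_eq_add_convK {k lam : ℝ → ℝ} (hk0 : ∀ u, 0 ≤ u → 0 ≤ k u)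
    (hki : IntegrableOn k (Ioi 0)) (hlam : Continuous lam) (hlam0 : ∀ t, 0 ≤ lam t) {μ : ℝ}
    (heq : ∀ t, 0 ≤ t → lam t = μ + convK k lam t) {A : ℝ} (hA : 0 ≤ A) (n : ℕ) {t : ℝ}
    (ht : n * A ≤ t) : μ * ∑ i ∈ Finset.range n, (∫ s in (0:ℝ)..A, k s) ^ i ≤ lam t := by
  induction n generalizing t with
  | zero => simpa using hlam0 t
  | succ n ih =>
    push_cast at ht
    have hAt : A ≤ t := by nlinarith [(n.cast_nonneg : (0:ℝ) ≤ n)]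
    have hstep := mul_intervalIntegral_le_convK hk0 hki hlam hlam0 hA hAt
      fun u hu => ih (by linarith [hu.1])
    rw [heq t (hA.trans hAt), geom_sum_succ]
    linarith

theorem tendsto_of_eq_add_convK {k lam : ℝ → ℝ} (hk0 : ∀ u, 0 ≤ u → 0 ≤ k u)
    (hki : IntegrableOn k (Ioi 0)) (hlam : Continuous lam) (hlam0 : ∀ t, 0 ≤ lam t) {μ : ℝ}
    (heq : ∀ t, 0 ≤ t → lam t = μ + convK k lam t) (hk : l1 k < 1) :
    Tendsto lam atTop (𝓝 (μ / (1 - l1 k))) := by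
  refine tendsto_order.2 ⟨fun r hr => ?_, fun r hr => ?_⟩
  · have htrunc : Tendsto (fun A => μ / (1 - ∫ s in (0:ℝ)..A, k s)) atTop
        (𝓝 (μ / (1 - l1 k))) :=
      tendsto_const_nhds.div (tendsto_const_nhds.sub
        (intervalIntegral_tendsto_integral_Ioi 0 hki tendsto_id)) (by linarith)
    obtain ⟨A, hrA, hA⟩ := ((htrunc.eventually (eventually_gt_nhds hr)).and
      (eventually_ge_atTop 0)).exists
    set I := ∫ s in (0:ℝ)..A, k s
    have hI : I < 1 := (intervalIntegral_le_l1 hk0 hki hA).trans_lt hk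
    have hI0 : 0 ≤ I := intervalIntegral.integral_nonneg hA fun u hu => hk0 u hu.1
    have hgeom : Tendsto (fun n => μ * ∑ i ∈ Finset.range n, I ^ i) atTop
        (𝓝 (μ / (1 - I))) := by
      rw [div_eq_mul_inv]
      exact ((hasSum_geometric_of_lt_one hI0 hI).tendsto_sum_nat).const_mul μ
    obtain ⟨n, hn⟩ := (hgeom.eventually (eventually_gt_nhds hrA)).exists
    filter_upwards [eventually_ge_atTop (n * A)] with t ht
    exact hn.trans_le (mul_geom_sum_le_of_eq_add_convK hk0 hki hlam hlam0 heq hA n ht)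
  · filter_upwards [eventually_ge_atTop 0] with t ht
    refine (le_div_of_le_add_mul_convK hk0 hki hlam hlam0 zero_le_one (by linarith)
      (fun t ht => by rw [one_mul, heq t ht]) ht).trans_lt ?_
    rwa [one_mul]

theorem tendsto_atTop_of_eq_add_convK {k lam : ℝ → ℝ} (hk0 : ∀ u, 0 ≤ u → 0 ≤ k u)
    (hki : IntegrableOn k (Ioi 0)) (hlam : Continuous lam) (hlam0 : ∀ t, 0 ≤ lam t) {μ : ℝ}
    (hμ : 0 < μ) (heq : ∀ t, 0 ≤ t → lam t = μ + convK k lam t) (hk : 1 < l1 k) :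
    Tendsto lam atTop atTop := by
  obtain ⟨A, hIA, hA⟩ := (((intervalIntegral_tendsto_integral_Ioi 0 hki tendsto_id).eventually
    (eventually_gt_nhds hk)).and (eventually_ge_atTop 0)).exists
  refine tendsto_atTop.2 fun b => ?_
  obtain ⟨n, hn⟩ := exists_nat_ge (b / μ)
  filter_upwards [eventually_ge_atTop (n * A)] with t ht
  have hsum : (n : ℝ) ≤ ∑ i ∈ Finset.range n, (∫ s in (0:ℝ)..A, k s) ^ i := by
    simpa using Finset.card_nsmul_le_sum (Finset.range n) _ 1 fun i _ => one_le_pow₀ hIA.le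
  calc b ≤ μ * n := by rwa [div_le_iff₀' hμ] at hn
    _ ≤ lam t := (mul_le_mul_of_nonneg_left hsum hμ.le).trans
      (mul_geom_sum_le_of_eq_add_convK hk0 hki hlam hlam0 heq hA n ht)

theorem bddAbove_image_of_eq_comp_convK {k lam Φ : ℝ → ℝ} (hk0 : ∀ u, 0 ≤ u → 0 ≤ k u)
    (hki : IntegrableOn k (Ioi 0)) (hlam : Continuous lam) (hlam0 : ∀ t, 0 ≤ lam t) {L : ℝ}
    (hL : 0 ≤ L) (hΦ : ∀ x y, 0 ≤ x → 0 ≤ y → |Φ x - Φ y| ≤ L * |x - y|) (hLk : L * l1 k < 1)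
    (heq : ∀ t, 0 ≤ t → lam t = Φ (convK k lam t)) : BddAbove (lam '' Ici 0) := by
  refine ⟨Φ 0 / (1 - L * l1 k), ?_⟩
  rintro _ ⟨t, ht, rfl⟩
  refine le_div_of_le_add_mul_convK hk0 hki hlam hlam0 hL hLk (fun t ht => ?_) ht
  have hx := convK_nonneg hk0 hlam0 (t := t) ht
  have hlip := hΦ _ 0 hx le_rfl
  rw [sub_zero, abs_of_nonneg hx] at hlip
  rw [heq t ht]
  linarith [le_abs_self (Φ (convK k lam t) - Φ 0)]

theorem convK_eq_zero_of_l1_eq_zero {h : ℝ → ℝ} (h0 : ∀ u, 0 ≤ u → 0 ≤ h u)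
    (hi : IntegrableOn h (Ioi 0)) (hl1 : l1 h = 0) (f : ℝ → ℝ) {t : ℝ} (ht : 0 ≤ t) :
    convK h f t = 0 := by
  have hae : ∀ᵐ s, s ∈ Ici (0:ℝ) → h s = 0 := by
    have hnn : 0 ≤ᵐ[volume.restrict (Ici 0)] h :=
      (ae_restrict_iff' measurableSet_Ici).2 (ae_of_all _ h0)
    rw [l1, ← integral_Ici_eq_integral_Ioi, setIntegral_eq_zero_iff_of_nonneg_ae hnn
      ((integrableOn_Ici_iff_integrableOn_Ioi).2 hi)] at hl1
    exact (ae_restrict_iff' measurableSet_Ici).1 hl1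
  have hae' : ∀ᵐ u, t - u ∈ Ici (0:ℝ) → h (t - u) = 0 :=
    (Measure.measurePreserving_sub_left volume t).quasiMeasurePreserving.ae hae
  rw [convK, intervalIntegral.integral_congr_ae (g := fun _ => 0) ?_,
    intervalIntegral.integral_zero]
  filter_upwards [hae'] with u hu hmem
  rw [uIoc_of_le ht] at hmem
  simp [hu (sub_nonneg.2 hmem.2)]

theorem IsGenSys.lA_eq_of_decoupled {α : ℝ} {h₁ h₂ h₃ h₄ ΦA ΦB ΦBA ΦAB lA lB : ℝ → ℝ}
    (hsys : IsGenSys α h₁ h₂ h₃ h₄ ΦA ΦB ΦBA ΦAB lA lB) (hBA : ΦBA 0 = 1)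
    (h₂0 : ∀ t, 0 ≤ t → convK h₂ lB t = 0) {t : ℝ} (ht : 0 ≤ t) :
    lA t = ΦA (convK (fun s => α * h₁ s) lA t) := by
  obtain ⟨-, -, -, -, hA, -⟩ := hsys
  rw [hA t ht, h₂0 t ht, mul_zero, hBA, mul_one, convK_const_mul_left]

theorem IsGenSys.lB_eq_of_decoupled {α : ℝ} {h₁ h₂ h₃ h₄ ΦA ΦB ΦBA ΦAB lA lB : ℝ → ℝ}
    (hsys : IsGenSys α h₁ h₂ h₃ h₄ ΦA ΦB ΦBA ΦAB lA lB) (hAB : ΦAB 0 = 0)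
    (h₄0 : ∀ t, 0 ≤ t → convK h₄ lA t = 0) {t : ℝ} (ht : 0 ≤ t) :
    lB t = ΦB (convK (fun s => (1 - α) * h₃ s) lB t) := by
  obtain ⟨-, -, -, -, -, hB⟩ := hsys
  rw [hB t ht, h₄0 t ht, mul_zero, hAB, add_zero, convK_const_mul_left]

theorem stmt2_general
    (α : ℝ) (hα : α ∈ Set.Ioo (0:ℝ) 1)
    (h₁ h₂ h₃ h₄ : ℝ → ℝ)
    (hh₁ : KernelOK h₁) (hh₂ : KernelOK h₂) (hh₃ : KernelOK h₃) (hh₄ : KernelOK h₄)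
    (κ₁ κ₂ κ₃ κ₄ : ℝ)
    (hκ₁ : κ₁ = α * l1 h₁) (hκ₂ : κ₂ = (1 - α) * l1 h₂)
    (hκ₃ : κ₃ = (1 - α) * l1 h₃) (hκ₄ : κ₄ = α * l1 h₄)
    (ΦBA ΦAB : ℝ → ℝ) (hBA : InhibOK ΦBA) (hAB : FeedOK ΦAB)
    (ΦA ΦB : ℝ → ℝ) (LA LB : ℝ) (hLA : 0 ≤ LA) (hLB : 0 ≤ LB)
    (hΦAlip : ∀ x y, 0 ≤ x → 0 ≤ y → |ΦA x - ΦA y| ≤ LA * |x - y|)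
    (hΦBlip : ∀ x y, 0 ≤ x → 0 ≤ y → |ΦB x - ΦB y| ≤ LB * |x - y|)
    (μA μB : ℝ)
    (hk2 : κ₂ = 0) (hk4 : κ₄ = 0) :
    ((LA * κ₁ < 1 → ∀ lA lB, IsGenSys α h₁ h₂ h₃ h₄ ΦA ΦB ΦBA ΦAB lA lB →
        BddAbove (lA '' Set.Ici 0)) ∧
     (LB * κ₃ < 1 → ∀ lA lB, IsGenSys α h₁ h₂ h₃ h₄ ΦA ΦB ΦBA ΦAB lA lB →
        BddAbove (lB '' Set.Ici 0))) ∧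
    (∀ lA lB, IsLinSys α h₁ h₂ h₃ h₄ ΦBA ΦAB μA μB lA lB →
      (κ₁ < 1 → Tendsto lA atTop (𝓝 (μA / (1 - κ₁)))) ∧
      (κ₃ < 1 → Tendsto lB atTop (𝓝 (μB / (1 - κ₃)))) ∧
      (1 < κ₁ → 0 < μA → Tendsto lA atTop atTop) ∧
      (1 < κ₃ → 0 < μB → Tendsto lB atTop atTop)) := by
  obtain ⟨hα0, hα1⟩ := hα
  obtain ⟨⟨-, hp₁, hi₁⟩, -⟩ := hh₁
  obtain ⟨⟨-, hp₂, hi₂⟩, -⟩ := hh₂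
  obtain ⟨⟨-, hp₃, hi₃⟩, -⟩ := hh₃
  obtain ⟨⟨-, hp₄, hi₄⟩, -⟩ := hh₄
  have hl1₂ : l1 h₂ = 0 := (mul_eq_zero.1 (hκ₂.symm.trans hk2)).resolve_left (by linarith)
  have hl1₄ : l1 h₄ = 0 := (mul_eq_zero.1 (hκ₄.symm.trans hk4)).resolve_left hα0.ne'
  have hpA : ∀ u, 0 ≤ u → 0 ≤ α * h₁ u := fun u hu => mul_nonneg hα0.le (hp₁ u hu)
  have hpB : ∀ u, 0 ≤ u → 0 ≤ (1 - α) * h₃ u := fun u hu => mul_nonneg (by linarith) (hp₃ u hu)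
  have hiA := hi₁.const_mul α
  have hiB := hi₃.const_mul (1 - α)
  have hlA : l1 (fun s => α * h₁ s) = κ₁ := by rw [l1_const_mul, hκ₁]
  have hlB : l1 (fun s => (1 - α) * h₃ s) = κ₃ := by rw [l1_const_mul, hκ₃]
  rw [← hlA, ← hlB]
  have hA {ΦA ΦB lA lB} (hsys : IsGenSys α h₁ h₂ h₃ h₄ ΦA ΦB ΦBA ΦAB lA lB) (t) (ht : 0 ≤ t) :=
    hsys.lA_eq_of_decoupled hBA.2.2.1 (fun t => convK_eq_zero_of_l1_eq_zero hp₂ hi₂ hl1₂ lB) ht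
  have hB {ΦA ΦB lA lB} (hsys : IsGenSys α h₁ h₂ h₃ h₄ ΦA ΦB ΦBA ΦAB lA lB) (t) (ht : 0 ≤ t) :=
    hsys.lB_eq_of_decoupled hAB.2.2.1 (fun t => convK_eq_zero_of_l1_eq_zero hp₄ hi₄ hl1₄ lA) ht
  refine ⟨⟨fun hsub lA lB hsys => ?_, fun hsub lA lB hsys => ?_⟩,
    fun lA lB hsys => ⟨?_, ?_, ?_, ?_⟩⟩
  · exact bddAbove_image_of_eq_comp_convK hpA hiA hsys.1 hsys.2.2.1 hLA hΦAlip hsub (hA hsys)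
  · exact bddAbove_image_of_eq_comp_convK hpB hiB hsys.2.1 hsys.2.2.2.1 hLB hΦBlip hsub (hB hsys)
  · exact tendsto_of_eq_add_convK hpA hiA hsys.1 hsys.2.2.1 (hA hsys)
  · exact tendsto_of_eq_add_convK hpB hiB hsys.2.1 hsys.2.2.2.1 (hB hsys)
  · exact fun hk hμ => tendsto_atTop_of_eq_add_convK hpA hiA hsys.1 hsys.2.2.1 hμ (hA hsys) hk
  · exact fun hk hμ => tendsto_atTop_of_eq_add_convK hpB hiB hsys.2.1 hsys.2.2.2.1 hμ (hB hsys) hk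

/-- Fully decoupled case `κ₂ = κ₄ = 0`: subcriticality criteria for the general
system and explicit limits / divergence for the linear system. -/
theorem stmt2
    (α : ℝ) (hα : α ∈ Set.Ioo (0:ℝ) 1)
    (h₁ h₂ h₃ h₄ : ℝ → ℝ)
    (hh₁ : KernelOK h₁) (hh₂ : KernelOK h₂) (hh₃ : KernelOK h₃) (hh₄ : KernelOK h₄)
    (κ₁ κ₂ κ₃ κ₄ : ℝ)
    (hκ₁ : κ₁ = α * l1 h₁) (hκ₂ : κ₂ = (1 - α) * l1 h₂)
    (hκ₃ : κ₃ = (1 - α) * l1 h₃) (hκ₄ : κ₄ = α * l1 h₄)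
    (ΦBA ΦAB : ℝ → ℝ) (hBA : InhibOK ΦBA) (hAB : FeedOK ΦAB)
    (ΦA ΦB : ℝ → ℝ) (LA LB : ℝ) (hLA : 0 ≤ LA) (hLB : 0 ≤ LB)
    (hΦApos : ∀ x, 0 ≤ x → 0 ≤ ΦA x) (hΦBpos : ∀ x, 0 ≤ x → 0 ≤ ΦB x)
    (hΦAlip : ∀ x y, 0 ≤ x → 0 ≤ y → |ΦA x - ΦA y| ≤ LA * |x - y|)
    (hΦBlip : ∀ x y, 0 ≤ x → 0 ≤ y → |ΦB x - ΦB y| ≤ LB * |x - y|)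
    (μA μB : ℝ) (hμA : 0 ≤ μA) (hμB : 0 ≤ μB)
    (hk2 : κ₂ = 0) (hk4 : κ₄ = 0) :
    ((LA * κ₁ < 1 → ∀ lA lB, IsGenSys α h₁ h₂ h₃ h₄ ΦA ΦB ΦBA ΦAB lA lB →
        BddAbove (lA '' Set.Ici 0)) ∧
     (LB * κ₃ < 1 → ∀ lA lB, IsGenSys α h₁ h₂ h₃ h₄ ΦA ΦB ΦBA ΦAB lA lB →
        BddAbove (lB '' Set.Ici 0))) ∧
    (∀ lA lB, IsLinSys α h₁ h₂ h₃ h₄ ΦBA ΦAB μA μB lA lB →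
      (κ₁ < 1 → Tendsto lA atTop (𝓝 (μA / (1 - κ₁)))) ∧
      (κ₃ < 1 → Tendsto lB atTop (𝓝 (μB / (1 - κ₃)))) ∧
      (1 < κ₁ → 0 < μA → Tendsto lA atTop atTop) ∧
      (1 < κ₃ → 0 < μB → Tendsto lB atTop atTop)) :=
  stmt2_general α hα h₁ h₂ h₃ h₄ hh₁ hh₂ hh₃ hh₄ κ₁ κ₂ κ₃ κ₄ hκ₁ hκ₂ hκ₃ hκ₄ ΦBA ΦAB hBA hAB ΦA ΦB
    LA LB hLA hLB hΦAlip hΦBlip μA μB hk2 hk4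
end

section
/- Suppose κ₂ = 0 and κ₄ > 0 (retroaction without inhibition). Then for the general mean-field system: if ‖Φ_A‖_L · κ₁ < 1, then sup_{t≥0} λ^A(t) < ∞. Moreover, for the linear mean-field system: (1) if κ₁ < 1, then λ^A(t) → μ_A/(1−κ₁) as t → ∞, and furthermore (a) if κ₃ < 1 then λ^B(t) → μ_B/(1−κ₃) + Φ_{A→B}(κ₄μ_A/(1−κ₁))/(1−κ₃) as t → ∞, while (b) if κ₃ > 1 and μ_B > 0 then λ^B(t) → +∞ as t → ∞; (2) if κ₁ > 1 and μ_A > 0, then both λ^A(t) → +∞ and λ^B(t) → +∞ as t → ∞. -/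
open MeasureTheory Filter Topology Set
open scoped ENNReal

/-!
Since `κ₂ = 0`, `‖h₂‖₁ = 0` and convolution with `h₂` vanishes, so the inhibition factor is
constantly `Φ_{B→A}(0) = 1`: `λ^A` solves a scalar renewal equation, and `λ^B` solves one forced by
`Φ_{A→B}(α h₄ ∗ λ^A)`. Everything then follows from three facts about `f = g + q (h ∗ f)` with
`θ = q ‖h‖₁`:
* if `θ < 1`, evaluating at a maximum point of `f` on `[0, t]` bounds `f` by `sup g / (1 - θ)`;
* if `θ < 1` and `g → c`, the deviation `φ = |f - c / (1 - θ)|` satisfies `φ ≤ r + q (h ∗ φ)`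
  with `r → 0`, so `limsup φ ≤ θ limsup φ`, hence `φ → 0`;
* if `θ > 1` and `g ≥ μ > 0`, pick `T` with `q ∫₀ᵀ h ≥ 1`; then `f ≥ n μ` eventually, by induction
  on `n`, comparing `f` with its values on the window `[t - T, t]`.
-/

theorem eventually_forall_mem_Icc_sub {P : ℝ → Prop} (hP : ∀ᶠ t in atTop, P t) (T : ℝ) :
    ∀ᶠ t in atTop, ∀ u ∈ Icc (t - T) t, P u := by
  obtain ⟨t₀, ht₀⟩ := eventually_atTop.1 hP
  filter_upwards [eventually_ge_atTop (t₀ + T)] with t ht u hu using ht₀ u (by linarith [hu.1])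

theorem tendsto_comp_of_lipschitz_Ici {ι : Type*} {l : Filter ι} {Φ : ℝ → ℝ} {G : ι → ℝ} {K p : ℝ}
    (hΦ : ∀ x y, 0 ≤ x → 0 ≤ y → |Φ x - Φ y| ≤ K * |x - y|) (hp : 0 ≤ p)
    (hG0 : ∀ᶠ i in l, 0 ≤ G i) (hG : Tendsto G l (𝓝 p)) :
    Tendsto (fun i => Φ (G i)) l (𝓝 (Φ p)) := by
  refine tendsto_sub_nhds_zero_iff.1 (squeeze_zero_norm' (hG0.mono fun i hi => hΦ _ _ hi hp) ?_)
  simpa using ((hG.sub_const p).abs.const_mul K)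

theorem uIcc_subset_uIcc_zero {a b t : ℝ} (ha : 0 ≤ a) (hab : a ≤ b) (hbt : b ≤ t) :
    uIcc a b ⊆ uIcc 0 t := by
  rw [uIcc_of_le hab, uIcc_of_le (ha.trans (hab.trans hbt))]
  exact Icc_subset_Icc ha hbt

namespace KernelL1

variable {h f φ : ℝ → ℝ} {a b s t T B M m q : ℝ}

theorem l1_nonneg (hk : KernelL1 h) : 0 ≤ l1 h :=
  setIntegral_nonneg measurableSet_Ioi fun x hx => hk.2.1 x hx.le

theorem intervalIntegrable (hk : KernelL1 h) (ha : 0 ≤ a) (hab : a ≤ b) :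
    IntervalIntegrable h volume a b := by
  rw [intervalIntegrable_iff_integrableOn_Ioc_of_le hab]
  exact hk.2.2.mono_set fun x hx => ha.trans_lt hx.1

theorem integral_le_l1 (hk : KernelL1 h) (hT : 0 ≤ T) : ∫ u in (0:ℝ)..T, h u ≤ l1 h := by
  rw [intervalIntegral.integral_of_le hT]
  exact setIntegral_mono_set hk.2.2
    ((ae_restrict_iff' measurableSet_Ioi).2 (ae_of_all _ fun x hx => hk.2.1 x hx.le))
    Ioc_subset_Ioi_self.eventuallyLE

theorem tendsto_integral (hk : KernelL1 h) :
    Tendsto (fun T => ∫ u in (0:ℝ)..T, h u) atTop (𝓝 (l1 h)) :=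
  intervalIntegral_tendsto_integral_Ioi 0 hk.2.2 tendsto_id

theorem intervalIntegrable_comp_sub_left (hk : KernelL1 h) (ht : 0 ≤ t)
    (hab : uIcc a b ⊆ uIcc 0 t) : IntervalIntegrable (fun u => h (t - u)) volume a b := by
  have h0t : IntervalIntegrable (fun u => h (t - u)) volume 0 t := by
    simpa using ((hk.intervalIntegrable le_rfl ht).comp_sub_left t).symm
  exact h0t.mono_set hab

theorem intervalIntegrable_convK (hk : KernelL1 h) (hf : Continuous f) (ht : 0 ≤ t)
    (hab : uIcc a b ⊆ uIcc 0 t) :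
    IntervalIntegrable (fun u => h (t - u) * f u) volume a b :=
  (hk.intervalIntegrable_comp_sub_left ht hab).mul_continuousOn hf.continuousOn

theorem integral_kernel_mul_le (hk : KernelL1 h) (hf : Continuous f) (ha : 0 ≤ a)
    (hab : a ≤ b) (hbt : b ≤ t) (hfM : ∀ u ∈ Icc a b, f u ≤ M) :
    ∫ u in a..b, h (t - u) * f u ≤ M * ∫ u in (t - b)..(t - a), h u := by
  have ht : 0 ≤ t := ha.trans (hab.trans hbt)
  have hsub := uIcc_subset_uIcc_zero ha hab hbt
  rw [mul_comm, ← intervalIntegral.integral_comp_sub_left (fun u => h u) t,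
    ← intervalIntegral.integral_mul_const]
  exact intervalIntegral.integral_mono_on hab (hk.intervalIntegrable_convK hf ht hsub)
    ((hk.intervalIntegrable_comp_sub_left ht hsub).mul_const M) fun u hu =>
      mul_le_mul_of_nonneg_left (hfM u hu) (hk.2.1 _ (by linarith [hu.2]))

theorem le_integral_kernel_mul (hk : KernelL1 h) (hf : Continuous f) (ha : 0 ≤ a)
    (hab : a ≤ b) (hbt : b ≤ t) (hfM : ∀ u ∈ Icc a b, M ≤ f u) :
    M * ∫ u in (t - b)..(t - a), h u ≤ ∫ u in a..b, h (t - u) * f u := by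
  have ht : 0 ≤ t := ha.trans (hab.trans hbt)
  have hsub := uIcc_subset_uIcc_zero ha hab hbt
  rw [mul_comm, ← intervalIntegral.integral_comp_sub_left (fun u => h u) t,
    ← intervalIntegral.integral_mul_const]
  exact intervalIntegral.integral_mono_on hab
    ((hk.intervalIntegrable_comp_sub_left ht hsub).mul_const M)
    (hk.intervalIntegrable_convK hf ht hsub) fun u hu =>
      mul_le_mul_of_nonneg_left (hfM u hu) (hk.2.1 _ (by linarith [hu.2]))

theorem convK_nonneg (hk : KernelL1 h) (ht : 0 ≤ t) (hf0 : ∀ u, 0 ≤ f u) :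
    0 ≤ convK h f t :=
  intervalIntegral.integral_nonneg ht fun u hu =>
    mul_nonneg (hk.2.1 _ (by linarith [hu.2])) (hf0 u)

theorem convK_le_mul_l1 (hk : KernelL1 h) (hf : Continuous f) (ht : 0 ≤ t) (hM : 0 ≤ M)
    (hfM : ∀ u ∈ Icc 0 t, f u ≤ M) : convK h f t ≤ M * l1 h := by
  have := hk.integral_kernel_mul_le hf le_rfl ht le_rfl hfM
  rw [sub_self, sub_zero] at this
  exact this.trans (mul_le_mul_of_nonneg_left (hk.integral_le_l1 ht) hM)

theorem convK_eq_add (hk : KernelL1 h) (hf : Continuous f) (hs : 0 ≤ s) (hst : s ≤ t) :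
    convK h f t = (∫ u in (0:ℝ)..s, h (t - u) * f u) + ∫ u in s..t, h (t - u) * f u :=
  (intervalIntegral.integral_add_adjacent_intervals
    (hk.intervalIntegrable_convK hf (hs.trans hst) (uIcc_subset_uIcc_zero le_rfl hs hst))
    (hk.intervalIntegrable_convK hf (hs.trans hst) (uIcc_subset_uIcc_zero hs hst le_rfl))).symm

theorem mul_integral_le_convK (hk : KernelL1 h) (hf : Continuous f) (hf0 : ∀ u, 0 ≤ f u)
    (hT : 0 ≤ T) (hTt : T ≤ t) (hfm : ∀ u ∈ Icc (t - T) t, m ≤ f u) :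
    m * ∫ u in (0:ℝ)..T, h u ≤ convK h f t := by
  rw [hk.convK_eq_add hf (sub_nonneg.2 hTt) (sub_le_self t hT)]
  have hfirst : 0 ≤ ∫ u in (0:ℝ)..(t - T), h (t - u) * f u :=
    intervalIntegral.integral_nonneg (by linarith) fun u hu =>
      mul_nonneg (hk.2.1 _ (by linarith [hu.2])) (hf0 u)
  have hwindow := hk.le_integral_kernel_mul hf (sub_nonneg.2 hTt) (sub_le_self t hT) le_rfl hfm
  rw [sub_self, sub_sub_cancel] at hwindow
  linarith

theorem convK_le_of_le_window (hk : KernelL1 h) (hf : Continuous f) (hT : 0 ≤ T) (hTt : T ≤ t)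
    (hB : 0 ≤ B) (hfB : ∀ u ∈ Icc 0 t, f u ≤ B) (hfm : ∀ u ∈ Icc (t - T) t, f u ≤ m) :
    convK h f t ≤ B * (l1 h - ∫ u in (0:ℝ)..T, h u) + m * ∫ u in (0:ℝ)..T, h u := by
  rw [hk.convK_eq_add hf (sub_nonneg.2 hTt) (sub_le_self t hT)]
  have hfirst := hk.integral_kernel_mul_le hf le_rfl (sub_nonneg.2 hTt) (sub_le_self t hT)
    fun u hu => hfB u ⟨hu.1, hu.2.trans (sub_le_self t hT)⟩
  have hwindow := hk.integral_kernel_mul_le hf (sub_nonneg.2 hTt) (sub_le_self t hT) le_rfl hfm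
  rw [sub_sub_cancel, sub_zero, ← intervalIntegral.integral_interval_sub_left
    (hk.intervalIntegrable le_rfl (hT.trans hTt)) (hk.intervalIntegrable le_rfl hT)] at hfirst
  rw [sub_self, sub_sub_cancel] at hwindow
  have htail : (∫ u in (0:ℝ)..t, h u) - ∫ u in (0:ℝ)..T, h u ≤ l1 h - ∫ u in (0:ℝ)..T, h u :=
    sub_le_sub_right (hk.integral_le_l1 (hT.trans hTt)) _
  nlinarith [mul_le_mul_of_nonneg_left htail hB]

theorem abs_convK_sub_mul_integral_le (hk : KernelL1 h) (hf : Continuous f) (ht : 0 ≤ t)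
    (L : ℝ) :
    |convK h f t - L * ∫ u in (0:ℝ)..t, h u| ≤ convK h (fun u => |f u - L|) t := by
  have hdev : convK h f t - L * ∫ u in (0:ℝ)..t, h u
      = ∫ u in (0:ℝ)..t, h (t - u) * (f u - L) := by
    have hconst : L * ∫ u in (0:ℝ)..t, h u = ∫ u in (0:ℝ)..t, h (t - u) * L := by
      rw [intervalIntegral.integral_mul_const, intervalIntegral.integral_comp_sub_left
        (fun u => h u), sub_self, sub_zero, mul_comm]
    simp_rw [hconst, convK, mul_sub]
    exact (intervalIntegral.integral_sub (hk.intervalIntegrable_convK hf ht subset_rfl)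
      ((hk.intervalIntegrable_comp_sub_left ht subset_rfl).mul_const L)).symm
  rw [hdev]
  refine (intervalIntegral.abs_integral_le_integral_abs ht).trans_eq
    (intervalIntegral.integral_congr fun u hu => ?_)
  rw [uIcc_of_le ht] at hu
  simp only [abs_mul, abs_of_nonneg (hk.2.1 _ (sub_nonneg.2 hu.2))]

theorem convK_eq_zero_of_l1_eq_zero (hk : KernelL1 h) (hf : Continuous f) (hf0 : ∀ u, 0 ≤ f u)
    (hl1 : l1 h = 0) (ht : 0 ≤ t) : convK h f t = 0 := by
  obtain ⟨s, -, hmax⟩ := isCompact_Icc.exists_isMaxOn (nonempty_Icc.2 ht) hf.continuousOn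
  refine le_antisymm ?_ (hk.convK_nonneg ht hf0)
  simpa [hl1] using hk.convK_le_mul_l1 hf ht (hf0 s) fun u hu => hmax hu

theorem eventually_mul_integral_le_convK (hk : KernelL1 h) (hf : Continuous f)
    (hf0 : ∀ u, 0 ≤ f u) (hT : 0 ≤ T) (hm : ∀ᶠ t in atTop, m ≤ f t) :
    ∀ᶠ t in atTop, m * ∫ u in (0:ℝ)..T, h u ≤ convK h f t := by
  filter_upwards [eventually_forall_mem_Icc_sub hm T, eventually_ge_atTop T] with t hwin hTt
  exact hk.mul_integral_le_convK hf hf0 hT hTt hwin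

theorem eventually_convK_lt (hk : KernelL1 h) (hf : Continuous f) (hf0 : ∀ u, 0 ≤ f u)
    (hfB : ∀ t, 0 ≤ t → f t ≤ B) (hm : ∀ᶠ t in atTop, f t ≤ m) (hb : m * l1 h < b) :
    ∀ᶠ t in atTop, convK h f t < b := by
  have hlim : Tendsto (fun T => B * (l1 h - ∫ u in (0:ℝ)..T, h u) + m * ∫ u in (0:ℝ)..T, h u)
      atTop (𝓝 (m * l1 h)) := by
    simpa using (((tendsto_const_nhds (x := l1 h)).sub hk.tendsto_integral).const_mul B).add
      (hk.tendsto_integral.const_mul m)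
  obtain ⟨T, hTb, hT⟩ := ((hlim.eventually (eventually_lt_nhds hb)).and
    (eventually_ge_atTop 0)).exists
  filter_upwards [eventually_forall_mem_Icc_sub hm T, eventually_ge_atTop T] with t hwin hTt
  exact (hk.convK_le_of_le_window hf hT hTt ((hf0 0).trans (hfB 0 le_rfl))
    (fun u hu => hfB u hu.1) hwin).trans_lt hTb

theorem tendsto_convK_of_tendsto_zero (hk : KernelL1 h) (hφ : Continuous φ)
    (hφ0 : ∀ u, 0 ≤ φ u) (hφB : ∀ t, 0 ≤ t → φ t ≤ B) (hlim : Tendsto φ atTop (𝓝 0)) :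
    Tendsto (convK h φ) atTop (𝓝 0) := by
  refine tendsto_order.2 ⟨fun a ha => ?_, fun b hb => ?_⟩
  · filter_upwards [eventually_ge_atTop 0] with t ht using ha.trans_le (hk.convK_nonneg ht hφ0)
  · have hl1 := hk.l1_nonneg
    have hm : 0 < b / (l1 h + 1) := div_pos hb (by linarith)
    refine hk.eventually_convK_lt hφ hφ0 hφB (hlim.eventually (eventually_le_nhds hm)) ?_
    rw [div_mul_eq_mul_div, div_lt_iff₀ (by linarith)]
    linarith

theorem tendsto_convK (hk : KernelL1 h) (hf : Continuous f) (hf0 : ∀ u, 0 ≤ f u)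
    (hfB : ∀ t, 0 ≤ t → f t ≤ B) {c : ℝ} (hlim : Tendsto f atTop (𝓝 c)) :
    Tendsto (convK h f) atTop (𝓝 (c * l1 h)) := by
  have hdev := hk.tendsto_convK_of_tendsto_zero (hf.sub continuous_const).abs
    (fun u => abs_nonneg (f u - c))
    (fun t ht => show |f t - c| ≤ B + |c| from
      (abs_sub _ _).trans (by rw [abs_of_nonneg (hf0 t)]; linarith [hfB t ht]))
    (by simpa using (hlim.sub_const c).abs)
  have hsmall : Tendsto (fun t => convK h f t - c * ∫ u in (0:ℝ)..t, h u) atTop (𝓝 0) :=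
    squeeze_zero_norm' ((eventually_ge_atTop 0).mono fun t ht =>
      hk.abs_convK_sub_mul_integral_le hf ht c) hdev
  simpa using hsmall.add (hk.tendsto_integral.const_mul c)

theorem tendsto_convK_atTop (hk : KernelL1 h) (hf : Continuous f) (hf0 : ∀ u, 0 ≤ f u)
    (hl1 : 0 < l1 h) (hlim : Tendsto f atTop atTop) : Tendsto (convK h f) atTop atTop := by
  obtain ⟨T, hJ, hT⟩ := ((hk.tendsto_integral.eventually (eventually_gt_nhds hl1)).and
    (eventually_ge_atTop 0)).exists
  refine tendsto_atTop.2 fun C => ?_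
  filter_upwards [hk.eventually_mul_integral_le_convK hf hf0 hT
    (hlim.eventually_ge_atTop (C / ∫ u in (0:ℝ)..T, h u))] with t ht
  rwa [div_mul_cancel₀ _ hJ.ne'] at ht

theorem le_div_of_le_renewal (hk : KernelL1 h) (hf : Continuous f) (hf0 : ∀ u, 0 ≤ f u)
    (hq : 0 ≤ q) (hθ : q * l1 h < 1) (hle : ∀ t, 0 ≤ t → f t ≤ M + q * convK h f t) :
    ∀ t, 0 ≤ t → f t ≤ M / (1 - q * l1 h) := by
  intro t ht
  obtain ⟨s, hs, hmax⟩ := isCompact_Icc.exists_isMaxOn (nonempty_Icc.2 ht) hf.continuousOn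
  have hconv : convK h f s ≤ f s * l1 h :=
    hk.convK_le_mul_l1 hf hs.1 (hf0 s) fun u hu => hmax ⟨hu.1, hu.2.trans hs.2⟩
  have hfs : f s ≤ M + q * (f s * l1 h) := (hle s hs.1).trans (by gcongr)
  have hts : f t ≤ f s := hmax ⟨ht, le_rfl⟩
  rw [le_div_iff₀ (by linarith)]
  nlinarith

theorem tendsto_zero_of_le_renewal (hk : KernelL1 h) (hφ : Continuous φ) (hφ0 : ∀ u, 0 ≤ φ u)
    (hφB : ∀ t, 0 ≤ t → φ t ≤ B) (hq : 0 ≤ q) (hθ : q * l1 h < 1) {r : ℝ → ℝ}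
    (hr : Tendsto r atTop (𝓝 0)) (hle : ∀ t, 0 ≤ t → φ t ≤ r t + q * convK h φ t) :
    Tendsto φ atTop (𝓝 0) := by
  have hbdd : IsBoundedUnder (· ≤ ·) atTop φ :=
    isBoundedUnder_of_eventually_le (eventually_atTop.2 ⟨0, hφB⟩)
  have hcobdd : IsCoboundedUnder (· ≤ ·) atTop φ := isCoboundedUnder_le_of_le atTop hφ0
  set s := limsup φ atTop
  have hstep : ∀ δ > 0, s ≤ q * ((s + δ) * l1 h + δ) + δ := by
    intro δ hδ
    have hconv := hk.eventually_convK_lt hφ hφ0 hφB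
      ((eventually_lt_of_limsup_lt (lt_add_of_pos_right s hδ) hbdd).mono fun _ => le_of_lt)
      (lt_add_of_pos_right ((s + δ) * l1 h) hδ)
    refine limsup_le_of_le hcobdd ?_
    filter_upwards [hconv, hr.eventually (eventually_lt_nhds hδ), eventually_ge_atTop 0]
      with t hct hrt ht
    linarith [hle t ht, mul_le_mul_of_nonneg_left hct.le hq]
  have hlim : Tendsto (fun δ => q * ((s + δ) * l1 h + δ) + δ) (𝓝[>] 0) (𝓝 (q * l1 h * s)) := by
    have hcont : Continuous fun δ => q * ((s + δ) * l1 h + δ) + δ := by fun_prop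
    convert (hcont.tendsto 0).mono_left nhdsWithin_le_nhds using 2
    ring
  have hs : s ≤ q * l1 h * s :=
    ge_of_tendsto hlim (eventually_nhdsWithin_of_forall fun δ hδ => hstep δ hδ)
  have hs0 : s ≤ 0 := by nlinarith
  exact tendsto_order.2 ⟨fun a ha => Eventually.of_forall fun t => ha.trans_le (hφ0 t),
    fun b hb => eventually_lt_of_limsup_lt (hs0.trans_lt hb) hbdd⟩

theorem tendsto_of_renewal (hk : KernelL1 h) (hf : Continuous f) (hf0 : ∀ u, 0 ≤ f u)
    (hq : 0 ≤ q) (hθ : q * l1 h < 1) {g : ℝ → ℝ} {c G : ℝ} (hgG : ∀ t, 0 ≤ t → g t ≤ G)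
    (hg : Tendsto g atTop (𝓝 c)) (heq : ∀ t, 0 ≤ t → f t = g t + q * convK h f t) :
    Tendsto f atTop (𝓝 (c / (1 - q * l1 h))) := by
  set L := c / (1 - q * l1 h)
  have hL : c = L - q * l1 h * L := by
    simp only [L]; field_simp [(by linarith : (1 - q * l1 h) ≠ 0)]
  have hfB := hk.le_div_of_le_renewal hf hf0 hq hθ fun t ht =>
    (heq t ht).le.trans (by gcongr; exact hgG t ht)
  set J := fun t => ∫ u in (0:ℝ)..t, h u
  set r := fun t => |g t - c| + q * |L| * |J t - l1 h|
  have hr : Tendsto r atTop (𝓝 0) := by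
    simpa using (hg.sub_const c).abs.add
      (((hk.tendsto_integral.sub_const (l1 h)).abs).const_mul (q * |L|))
  have hle : ∀ t, 0 ≤ t → |f t - L| ≤ r t + q * convK h (fun u => |f u - L|) t := by
    intro t ht
    have hdev : f t - L = (g t - c) + q * (convK h f t - L * J t) + q * L * (J t - l1 h) := by
      rw [heq t ht, hL]; ring
    calc |f t - L|
        ≤ |g t - c| + q * |convK h f t - L * J t| + q * |L| * |J t - l1 h| := by
          rw [hdev]
          refine (abs_add_three _ _ _).trans_eq ?_
          rw [abs_mul, abs_mul, abs_mul, abs_of_nonneg hq]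
      _ ≤ r t + q * convK h (fun u => |f u - L|) t := by
          have := mul_le_mul_of_nonneg_left (hk.abs_convK_sub_mul_integral_le hf ht L) hq
          simp only [r]; linarith
  have hφB : ∀ t, 0 ≤ t → |f t - L| ≤ G / (1 - q * l1 h) + |L| := fun t ht =>
    (abs_sub _ _).trans (by rw [abs_of_nonneg (hf0 t)]; linarith [hfB t ht])
  have hφ := hk.tendsto_zero_of_le_renewal (hf.sub continuous_const).abs
    (fun u => abs_nonneg _) hφB hq hθ hr hle
  exact tendsto_iff_norm_sub_tendsto_zero.2 (by simpa [Real.norm_eq_abs] using hφ)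

theorem tendsto_atTop_of_renewal (hk : KernelL1 h) (hf : Continuous f) (hf0 : ∀ u, 0 ≤ f u)
    (hq : 0 ≤ q) (hθ : 1 < q * l1 h) {μ : ℝ} (hμ : 0 < μ)
    (hle : ∀ t, 0 ≤ t → μ + q * convK h f t ≤ f t) : Tendsto f atTop atTop := by
  obtain ⟨T, hqJ, hT⟩ := (((hk.tendsto_integral.const_mul q).eventually
    (eventually_gt_nhds hθ)).and (eventually_ge_atTop 0)).exists
  have hgrowth : ∀ n : ℕ, ∀ᶠ t in atTop, n * μ ≤ f t := by
    intro n
    induction n with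
    | zero => simpa using (Eventually.of_forall hf0 : ∀ᶠ t in atTop, 0 ≤ f t)
    | succ n ih =>
      filter_upwards [hk.eventually_mul_integral_le_convK hf hf0 hT ih, eventually_ge_atTop 0]
        with t hconv ht
      have hnμ : 0 ≤ (n : ℝ) * μ := by positivity
      push_cast
      nlinarith [hle t ht, mul_le_mul_of_nonneg_left hconv hq]
  refine tendsto_atTop.2 fun C => ?_
  obtain ⟨n, hn⟩ := exists_nat_ge (C / μ)
  exact (hgrowth n).mono fun t ht => ((div_le_iff₀ hμ).1 hn).trans ht

theorem bddAbove_of_eq_comp_convK (hk : KernelL1 h) (hf : Continuous f) (hf0 : ∀ u, 0 ≤ f u)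
    (hq : 0 ≤ q) {Φ : ℝ → ℝ} {L : ℝ} (hL : 0 ≤ L)
    (hΦ : ∀ x y, 0 ≤ x → 0 ≤ y → |Φ x - Φ y| ≤ L * |x - y|) (hθ : L * (q * l1 h) < 1)
    (heq : ∀ t, 0 ≤ t → f t = Φ (q * convK h f t)) : BddAbove (f '' Ici 0) := by
  have hle : ∀ t, 0 ≤ t → f t ≤ Φ 0 + L * q * convK h f t := fun t ht => by
    have hx := mul_nonneg hq (hk.convK_nonneg ht hf0)
    have hlip := (abs_le.1 (hΦ _ 0 hx le_rfl)).2
    rw [sub_zero, abs_of_nonneg hx] at hlip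
    rw [heq t ht]
    linarith
  exact ⟨_, forall_mem_image.2 (hk.le_div_of_le_renewal hf hf0 (mul_nonneg hL hq)
    (by linarith) hle)⟩

end KernelL1

theorem tendsto_of_renewal_of_feedback {h k Φ a f : ℝ → ℝ} {p q μ c A K : ℝ}
    (hh : KernelL1 h) (hk : KernelL1 k) (ha : Continuous a) (ha0 : ∀ u, 0 ≤ a u)
    (haA : ∀ t, 0 ≤ t → a t ≤ A) (hlim : Tendsto a atTop (𝓝 c))
    (hΦ : ∀ x y, 0 ≤ x → 0 ≤ y → |Φ x - Φ y| ≤ K * |x - y|) (hΦmono : MonotoneOn Φ (Ici 0))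
    (hp : 0 ≤ p) (hf : Continuous f) (hf0 : ∀ u, 0 ≤ f u) (hq : 0 ≤ q) (hθ : q * l1 h < 1)
    (heq : ∀ t, 0 ≤ t → f t = (μ + Φ (p * convK k a t)) + q * convK h f t) :
    Tendsto f atTop (𝓝 ((μ + Φ (p * (c * l1 k))) / (1 - q * l1 h))) := by
  have hA : 0 ≤ A := (ha0 0).trans (haA 0 le_rfl)
  have hx0 : ∀ t, 0 ≤ t → 0 ≤ p * convK k a t := fun t ht =>
    mul_nonneg hp (hk.convK_nonneg ht ha0)
  have hxA : ∀ t, 0 ≤ t → p * convK k a t ≤ p * (A * l1 k) := fun t ht =>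
    mul_le_mul_of_nonneg_left (hk.convK_le_mul_l1 ha ht hA fun u hu => haA u hu.1) hp
  have hc : 0 ≤ c := ge_of_tendsto' hlim ha0
  refine hh.tendsto_of_renewal hf hf0 hq hθ (G := μ + Φ (p * (A * l1 k)))
    (fun t ht => ?_) ?_ heq
  · have := hΦmono (hx0 t ht) (mul_nonneg hp (mul_nonneg hA hk.l1_nonneg)) (hxA t ht)
    linarith
  · refine (tendsto_comp_of_lipschitz_Ici hΦ (mul_nonneg hp (mul_nonneg hc hk.l1_nonneg))
      ((eventually_ge_atTop 0).mono hx0) ?_).const_add μ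
    exact (hk.tendsto_convK ha ha0 haA hlim).const_mul p

theorem IsGenSys.eq_of_l1_eq_zero {α : ℝ} {h₁ h₂ h₃ h₄ ΦA ΦB ΦBA ΦAB lA lB : ℝ → ℝ}
    (hsys : IsGenSys α h₁ h₂ h₃ h₄ ΦA ΦB ΦBA ΦAB lA lB) (hk₂ : KernelL1 h₂) (hl1₂ : l1 h₂ = 0)
    (hBA : ΦBA 0 = 1) (t : ℝ) (ht : 0 ≤ t) : lA t = ΦA (α * convK h₁ lA t) := by
  rw [hsys.2.2.2.2.1 t ht, hk₂.convK_eq_zero_of_l1_eq_zero hsys.2.1 hsys.2.2.2.1 hl1₂ ht,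
    mul_zero, hBA, mul_one]

theorem stmt4_general
    (α : ℝ) (hα : α ∈ Set.Ioo (0:ℝ) 1)
    (h₁ h₂ h₃ h₄ : ℝ → ℝ)
    (hh₁ : KernelOK h₁) (hh₂ : KernelOK h₂) (hh₃ : KernelOK h₃) (hh₄ : KernelOK h₄)
    (κ₁ κ₂ κ₃ κ₄ : ℝ)
    (hκ₁ : κ₁ = α * l1 h₁) (hκ₂ : κ₂ = (1 - α) * l1 h₂)
    (hκ₃ : κ₃ = (1 - α) * l1 h₃) (hκ₄ : κ₄ = α * l1 h₄)
    (ΦBA ΦAB : ℝ → ℝ) (hBA : InhibOK ΦBA) (hAB : FeedOK ΦAB)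
    (ΦA ΦB : ℝ → ℝ) (LA : ℝ) (hLA : 0 ≤ LA)
    (hΦAlip : ∀ x y, 0 ≤ x → 0 ≤ y → |ΦA x - ΦA y| ≤ LA * |x - y|)
    (μA μB : ℝ)
    (hk2 : κ₂ = 0) (hk4 : 0 < κ₄) :
    (LA * κ₁ < 1 → ∀ lA lB, IsGenSys α h₁ h₂ h₃ h₄ ΦA ΦB ΦBA ΦAB lA lB →
        BddAbove (lA '' Set.Ici 0)) ∧
    (∀ lA lB, IsLinSys α h₁ h₂ h₃ h₄ ΦBA ΦAB μA μB lA lB →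
      (κ₁ < 1 →
        Tendsto lA atTop (𝓝 (μA / (1 - κ₁))) ∧
        (κ₃ < 1 →
          Tendsto lB atTop
            (𝓝 (μB / (1 - κ₃) + ΦAB (κ₄ * (μA / (1 - κ₁))) / (1 - κ₃)))) ∧
        (1 < κ₃ → 0 < μB → Tendsto lB atTop atTop)) ∧
      (1 < κ₁ → 0 < μA →
        Tendsto lA atTop atTop ∧ Tendsto lB atTop atTop)) := by
  obtain ⟨hα0, hα1⟩ := hα
  have hl1₂ : l1 h₂ = 0 := (mul_eq_zero.1 (hκ₂ ▸ hk2)).resolve_left (by linarith)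
  have hl1₄ : 0 < l1 h₄ := pos_of_mul_pos_right (hκ₄ ▸ hk4) hα0.le
  obtain ⟨⟨K, -, hKlip⟩, hABmono, -, hABnn, hABtop⟩ := hAB
  refine ⟨fun hθ lA lB hsys => ?_, fun lA lB hsys => ?_⟩
  · exact hh₁.1.bddAbove_of_eq_comp_convK hsys.1 hsys.2.2.1 hα0.le hLA hΦAlip (hκ₁ ▸ hθ)
      (hsys.eq_of_l1_eq_zero hh₂.1 hl1₂ hBA.2.2.1)
  have hA : ∀ t, 0 ≤ t → lA t = μA + α * convK h₁ lA t := hsys.eq_of_l1_eq_zero hh₂.1 hl1₂ hBA.2.2.1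
  obtain ⟨hcA, hcB, hA0, hB0, -, heqB⟩ := hsys
  have hB : ∀ t, 0 ≤ t → lB t = (μB + ΦAB (α * convK h₄ lA t)) + (1 - α) * convK h₃ lB t :=
    fun t ht => by rw [heqB t ht]; ring
  refine ⟨fun hκ1 => ?_, fun hκ1 hμA => ?_⟩
  · have hθ₁ : α * l1 h₁ < 1 := hκ₁ ▸ hκ1
    have hlA := hh₁.1.tendsto_of_renewal hcA hA0 hα0.le hθ₁ (fun _ _ => le_rfl)
      tendsto_const_nhds hA
    rw [← hκ₁] at hlA
    refine ⟨hlA, fun hκ3 => ?_, fun hκ3 hμB => ?_⟩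
    · have hlB := tendsto_of_renewal_of_feedback hh₃.1 hh₄.1 hcA hA0
        (hh₁.1.le_div_of_le_renewal hcA hA0 hα0.le hθ₁ fun t ht => (hA t ht).le) hlA hKlip
        hABmono hα0.le hcB hB0 (by linarith) (hκ₃ ▸ hκ3) hB
      rw [← hκ₃, add_div] at hlB
      convert hlB using 5
      rw [hκ₄]; ring
    · refine hh₃.1.tendsto_atTop_of_renewal hcB hB0 (by linarith) (hκ₃ ▸ hκ3) hμB fun t ht => ?_
      linarith [hB t ht, hABnn _ (mul_nonneg hα0.le (hh₄.1.convK_nonneg ht hA0))]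
  · have hlA := hh₁.1.tendsto_atTop_of_renewal hcA hA0 hα0.le (hκ₁ ▸ hκ1) hμA
      fun t ht => (hA t ht).ge
    refine ⟨hlA, tendsto_atTop_mono' atTop ?_ (tendsto_atTop_add_const_left _ μB
      (hABtop.comp ((hh₄.1.tendsto_convK_atTop hcA hA0 hl1₄ hlA).const_mul_atTop hα0)))⟩
    filter_upwards [eventually_ge_atTop 0] with t ht
    show μB + ΦAB (α * convK h₄ lA t) ≤ lB t
    linarith [hB t ht, mul_nonneg (by linarith : 0 ≤ 1 - α) (hh₃.1.convK_nonneg ht hB0)]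

/-- Retroaction without inhibition: `κ₂ = 0`, `κ₄ > 0`. -/
theorem stmt4
    (α : ℝ) (hα : α ∈ Set.Ioo (0:ℝ) 1)
    (h₁ h₂ h₃ h₄ : ℝ → ℝ)
    (hh₁ : KernelOK h₁) (hh₂ : KernelOK h₂) (hh₃ : KernelOK h₃) (hh₄ : KernelOK h₄)
    (κ₁ κ₂ κ₃ κ₄ : ℝ)
    (hκ₁ : κ₁ = α * l1 h₁) (hκ₂ : κ₂ = (1 - α) * l1 h₂)
    (hκ₃ : κ₃ = (1 - α) * l1 h₃) (hκ₄ : κ₄ = α * l1 h₄)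
    (ΦBA ΦAB : ℝ → ℝ) (hBA : InhibOK ΦBA) (hAB : FeedOK ΦAB)
    (ΦA ΦB : ℝ → ℝ) (LA LB : ℝ) (hLA : 0 ≤ LA) (hLB : 0 ≤ LB)
    (hΦApos : ∀ x, 0 ≤ x → 0 ≤ ΦA x) (hΦBpos : ∀ x, 0 ≤ x → 0 ≤ ΦB x)
    (hΦAlip : ∀ x y, 0 ≤ x → 0 ≤ y → |ΦA x - ΦA y| ≤ LA * |x - y|)
    (hΦBlip : ∀ x y, 0 ≤ x → 0 ≤ y → |ΦB x - ΦB y| ≤ LB * |x - y|)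
    (μA μB : ℝ) (hμA : 0 ≤ μA) (hμB : 0 ≤ μB)
    (hk2 : κ₂ = 0) (hk4 : 0 < κ₄) :
    (LA * κ₁ < 1 → ∀ lA lB, IsGenSys α h₁ h₂ h₃ h₄ ΦA ΦB ΦBA ΦAB lA lB →
        BddAbove (lA '' Set.Ici 0)) ∧
    (∀ lA lB, IsLinSys α h₁ h₂ h₃ h₄ ΦBA ΦAB μA μB lA lB →
      (κ₁ < 1 →
        Tendsto lA atTop (𝓝 (μA / (1 - κ₁))) ∧
        (κ₃ < 1 →
          Tendsto lB atTop
            (𝓝 (μB / (1 - κ₃) + ΦAB (κ₄ * (μA / (1 - κ₁))) / (1 - κ₃)))) ∧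
        (1 < κ₃ → 0 < μB → Tendsto lB atTop atTop)) ∧
      (1 < κ₁ → 0 < μA →
        Tendsto lA atTop atTop ∧ Tendsto lB atTop atTop)) :=
  stmt4_general α hα h₁ h₂ h₃ h₄ hh₁ hh₂ hh₃ hh₄ κ₁ κ₂ κ₃ κ₄ hκ₁ hκ₂ hκ₃ hκ₄ ΦBA ΦAB hBA hAB ΦA ΦB
    LA hLA hΦAlip μA μB hk2 hk4
end

section
/- Suppose κ₂ > 0, κ₄ > 0, μ_B > 0 and κ₃ > 1. Then for the linear mean-field system (λ^A, λ^B): λ^B(t) → +∞ as t → ∞ and λ^A(t) → 0 as t → ∞. -/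
open MeasureTheory Filter Topology Set
open scoped ENNReal

/-
Since `κ₃ > 1`, the `B`-equation gives `λ^B ≥ μ_B + (1-α) h₃ ⋆ λ^B`: once `λ^B ≥ c` from some
time on, the convolution eventually exceeds `c - μ_B/2`, so later `λ^B ≥ c + μ_B/2`, and iterating
gives `λ^B → ∞`. Then the inhibition argument `(1-α) h₂ ⋆ λ^B` tends to `∞` and `Φ_{B→A}` of it
to `0`. At a time `s` where `λ^A` attains its maximum over `[0,s]`, `h₁ ⋆ λ^A (s) ≤ ‖h₁‖₁ λ^A(s)`,
so once `Φ_{B→A}` is small the `A`-equation caps `λ^A(s)`; hence `λ^A` is bounded, and then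
`λ^A ≤ (μ_A + α ‖h₁‖₁ sup λ^A) Φ_{B→A}(…) → 0`.
-/

lemma l1_nonneg {h : ℝ → ℝ} (hh0 : ∀ u, 0 ≤ u → 0 ≤ h u) : 0 ≤ l1 h :=
  setIntegral_nonneg measurableSet_Ioi fun x hx => hh0 x (le_of_lt hx)

lemma intervalIntegrable_comp_sub_left_of_integrableOn_Ioi {h : ℝ → ℝ}
    (hh : IntegrableOn h (Ioi 0)) {t a b : ℝ} (hab : a ≤ b) (hbt : b ≤ t) :
    IntervalIntegrable (fun u => h (t - u)) volume a b := by
  have hI : IntervalIntegrable h volume (t - b) (t - a) := by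
    rw [intervalIntegrable_iff_integrableOn_Ioc_of_le (by linarith)]
    exact hh.mono_set fun x hx => lt_of_le_of_lt (by linarith) hx.1
  simpa only [sub_sub_cancel] using (hI.comp_sub_left t).symm

lemma intervalIntegrable_convK_integrand {h f : ℝ → ℝ} (hh : IntegrableOn h (Ioi 0))
    (hf : Continuous f) {t a b : ℝ} (hab : a ≤ b) (hbt : b ≤ t) :
    IntervalIntegrable (fun u => h (t - u) * f u) volume a b :=
  (intervalIntegrable_comp_sub_left_of_integrableOn_Ioi hh hab hbt).mul_continuousOn
    hf.continuousOn

lemma integral_comp_sub_left_mul_const (h : ℝ → ℝ) (c t a b : ℝ) :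
    ∫ u in a..b, h (t - u) * c = c * ∫ s in (t - b)..(t - a), h s := by
  rw [intervalIntegral.integral_mul_const, intervalIntegral.integral_comp_sub_left h t, mul_comm]

lemma convK_nonneg_s6 {h f : ℝ → ℝ} (hh0 : ∀ u, 0 ≤ u → 0 ≤ h u) (hf0 : ∀ u, 0 ≤ f u)
    {t : ℝ} (ht : 0 ≤ t) : 0 ≤ convK h f t :=
  intervalIntegral.integral_nonneg ht fun u hu =>
    mul_nonneg (hh0 _ (by linarith [hu.2])) (hf0 u)

lemma convK_le_mul_l1_s6 {h f : ℝ → ℝ} (hh0 : ∀ u, 0 ≤ u → 0 ≤ h u)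
    (hh : IntegrableOn h (Ioi 0)) (hf : Continuous f) {M t : ℝ} (hM : 0 ≤ M) (ht : 0 ≤ t)
    (hfM : ∀ u, 0 ≤ u → u ≤ t → f u ≤ M) :
    convK h f t ≤ M * l1 h := by
  have hconv : convK h f t ≤ M * ∫ s in (0:ℝ)..t, h s := calc
    convK h f t ≤ ∫ u in (0:ℝ)..t, h (t - u) * M := by
      refine intervalIntegral.integral_mono_on ht
        (intervalIntegrable_convK_integrand hh hf ht le_rfl)
        ((intervalIntegrable_comp_sub_left_of_integrableOn_Ioi hh ht le_rfl).mul_const M)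
        fun u hu => ?_
      exact mul_le_mul_of_nonneg_left (hfM u hu.1 hu.2) (hh0 _ (by linarith [hu.2]))
    _ = M * ∫ s in (0:ℝ)..t, h s := by
      rw [integral_comp_sub_left_mul_const, sub_self, sub_zero]
  have hpartial : ∫ s in (0:ℝ)..t, h s ≤ l1 h := by
    rw [intervalIntegral.integral_of_le ht]
    refine setIntegral_mono_set hh ?_ (Eventually.of_forall fun x hx => hx.1)
    filter_upwards [ae_restrict_mem measurableSet_Ioi] with x hx using hh0 x (le_of_lt hx)
  exact hconv.trans (mul_le_mul_of_nonneg_left hpartial hM)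

lemma mul_integral_le_convK {h f : ℝ → ℝ} (hh0 : ∀ u, 0 ≤ u → 0 ≤ h u)
    (hh : IntegrableOn h (Ioi 0)) (hf : Continuous f) (hf0 : ∀ u, 0 ≤ f u)
    {c T t : ℝ} (hT : 0 ≤ T) (hTt : T ≤ t) (hcf : ∀ u, T ≤ u → u ≤ t → c ≤ f u) :
    c * ∫ s in (0:ℝ)..(t - T), h s ≤ convK h f t := by
  have hhead : 0 ≤ ∫ u in (0:ℝ)..T, h (t - u) * f u :=
    intervalIntegral.integral_nonneg hT fun u hu =>
      mul_nonneg (hh0 _ (by linarith [hu.2])) (hf0 u)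
  have htail : c * ∫ s in (0:ℝ)..(t - T), h s ≤ ∫ u in T..t, h (t - u) * f u := by
    rw [← sub_self t, ← integral_comp_sub_left_mul_const]
    refine intervalIntegral.integral_mono_on hTt
      ((intervalIntegrable_comp_sub_left_of_integrableOn_Ioi hh hTt le_rfl).mul_const c)
      (intervalIntegrable_convK_integrand hh hf hTt le_rfl) fun u hu => ?_
    exact mul_le_mul_of_nonneg_left (hcf u hu.1 hu.2) (hh0 _ (by linarith [hu.2]))
  rw [convK, ← intervalIntegral.integral_add_adjacent_intervals
    (intervalIntegrable_convK_integrand hh hf hT hTt)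
    (intervalIntegrable_convK_integrand hh hf hTt le_rfl)]
  linarith

lemma eventually_lt_convK {h f : ℝ → ℝ} (hh0 : ∀ u, 0 ≤ u → 0 ≤ h u)
    (hh : IntegrableOn h (Ioi 0)) (hf : Continuous f) (hf0 : ∀ u, 0 ≤ f u) {b c : ℝ}
    (hcf : ∀ᶠ t in atTop, c ≤ f t) (hb : b < c * l1 h) :
    ∀ᶠ t in atTop, b < convK h f t := by
  obtain ⟨T₀, hT₀⟩ := eventually_atTop.1 hcf
  set T := max T₀ 0
  have hpartial : Tendsto (fun t => c * ∫ s in (0:ℝ)..(t - T), h s) atTop (𝓝 (c * l1 h)) :=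
    (intervalIntegral_tendsto_integral_Ioi 0 hh
      (tendsto_atTop_add_const_right _ _ tendsto_id)).const_mul c
  filter_upwards [hpartial.eventually_const_lt hb, eventually_ge_atTop T] with t hbt hTt
  exact hbt.trans_le (mul_integral_le_convK hh0 hh hf hf0 (le_max_right _ _) hTt
    fun u hu _ => hT₀ u ((le_max_left _ _).trans hu))

lemma tendsto_convK_atTop {h f : ℝ → ℝ} (hh0 : ∀ u, 0 ≤ u → 0 ≤ h u)
    (hh : IntegrableOn h (Ioi 0)) (hpos : 0 < l1 h) (hf : Continuous f) (hf0 : ∀ u, 0 ≤ f u)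
    (hftop : Tendsto f atTop atTop) : Tendsto (convK h f) atTop atTop := by
  refine tendsto_atTop.2 fun b => ?_
  have hb : b < (|b| + 1) / l1 h * l1 h := by
    rw [div_mul_cancel₀ _ hpos.ne']; linarith [le_abs_self b]
  exact (eventually_lt_convK hh0 hh hf hf0 (hftop.eventually_ge_atTop _) hb).mono
    fun _ => le_of_lt

lemma tendsto_atTop_of_eventually_add_le {ι : Type*} {l : Filter ι} {f : ι → ℝ} {δ : ℝ}
    (hδ : 0 < δ) (hf0 : ∀ᶠ x in l, 0 ≤ f x)
    (hstep : ∀ c, 0 ≤ c → (∀ᶠ x in l, c ≤ f x) → ∀ᶠ x in l, c + δ ≤ f x) :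
    Tendsto f l atTop := by
  have hn : ∀ n : ℕ, ∀ᶠ x in l, n * δ ≤ f x := by
    intro n
    induction n with
    | zero => simpa using hf0
    | succ n ih => simpa [add_mul] using hstep _ (by positivity) ih
  refine tendsto_atTop.2 fun b => ?_
  obtain ⟨n, hn'⟩ := exists_nat_ge (b / δ)
  exact (hn n).mono fun x hx => ((div_le_iff₀ hδ).1 hn').trans hx

lemma tendsto_atTop_of_add_mul_convK_le {h f : ℝ → ℝ} {μ k : ℝ}
    (hh0 : ∀ u, 0 ≤ u → 0 ≤ h u) (hh : IntegrableOn h (Ioi 0)) (hf : Continuous f)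
    (hf0 : ∀ u, 0 ≤ f u) (hμ : 0 < μ) (hk : 1 ≤ k * l1 h) (hfμ : ∀ t, 0 ≤ t → μ + k * convK h f t ≤ f t) :
    Tendsto f atTop atTop := by
  have hk0 : 0 < k := by
    by_contra! hk0
    nlinarith [l1_nonneg hh0]
  refine tendsto_atTop_of_eventually_add_le (half_pos hμ) (Eventually.of_forall hf0)
    fun c hc hcf => ?_
  have hb : (c - μ / 2) / k < c * l1 h := by
    rw [div_lt_iff₀ hk0]; nlinarith
  filter_upwards [eventually_lt_convK hh0 hh hf hf0 hcf hb, eventually_ge_atTop 0]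
    with t hbt ht
  linarith [(div_lt_iff₀' hk0).1 hbt, hfμ t ht]

lemma exists_forall_le_of_le_mul_convK {h f g : ℝ → ℝ} {μ a : ℝ}
    (hh0 : ∀ u, 0 ≤ u → 0 ≤ h u) (hh : IntegrableOn h (Ioi 0)) (hf : Continuous f)
    (hf0 : ∀ u, 0 ≤ f u) (hμ : 0 ≤ μ) (ha : 0 ≤ a) (hg : Tendsto g atTop (𝓝 0))
    (hfg : ∀ t, 0 ≤ t → f t ≤ (μ + a * convK h f t) * g t) :
    ∃ M, ∀ t, 0 ≤ t → f t ≤ M := by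
  have hl1 := l1_nonneg hh0
  obtain ⟨ε, hε, hεa⟩ : ∃ ε > 0, ε * (a * l1 h) ≤ 1 / 2 := by
    refine ⟨1 / (2 * (a * l1 h + 1)), by positivity, ?_⟩
    rw [div_mul_eq_mul_div, one_mul, div_le_div_iff₀ (by positivity) two_pos]
    linarith
  obtain ⟨T₀, hT₀⟩ := eventually_atTop.1 (hg.eventually_lt_const hε)
  set T := max T₀ 0
  have hT : 0 ≤ T := le_max_right _ _
  have running_max : ∀ t, 0 ≤ t → ∃ s ∈ Icc 0 t, ∀ u ∈ Icc 0 t, f u ≤ f s := fun t ht =>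
    isCompact_Icc.exists_isMaxOn (nonempty_Icc.2 ht) hf.continuousOn
  -- At a running maximum `s ≥ T`, `h ⋆ f (s) ≤ ‖h‖₁ f(s)` and `g s < ε` give `f s ≤ ε μ + f s / 2`.
  have late_max : ∀ s, T ≤ s → (∀ u ∈ Icc 0 s, f u ≤ f s) → f s ≤ 2 * ε * μ := by
    intro s hs hmax
    have hs0 : 0 ≤ s := hT.trans hs
    have hconv := convK_le_mul_l1_s6 hh0 hh hf (hf0 s) hs0 fun u hu hus => hmax u ⟨hu, hus⟩
    have hgs : g s < ε := hT₀ s ((le_max_left _ _).trans hs)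
    have hcoef : 0 ≤ μ + a * convK h f s := by
      have := convK_nonneg_s6 hh0 hf0 hs0; positivity
    have : f s ≤ ε * μ + 1 / 2 * f s := calc
      f s ≤ (μ + a * convK h f s) * ε :=
          (hfg s hs0).trans (mul_le_mul_of_nonneg_left hgs.le hcoef)
      _ ≤ (μ + a * (f s * l1 h)) * ε := by gcongr
      _ = ε * μ + ε * (a * l1 h) * f s := by ring
      _ ≤ ε * μ + 1 / 2 * f s := by gcongr; exact hf0 s
    linarith
  obtain ⟨s₀, -, hs₀⟩ := running_max T hT
  refine ⟨max (f s₀) (2 * ε * μ), fun t ht => ?_⟩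
  obtain ⟨s, hs, hmax⟩ := running_max t ht
  refine (hmax t ⟨ht, le_rfl⟩).trans ?_
  rcases le_total s T with hsT | hTs
  · exact (hs₀ s ⟨hs.1, hsT⟩).trans (le_max_left _ _)
  · exact (late_max s hTs fun u hu => hmax u ⟨hu.1, hu.2.trans hs.2⟩).trans
      (le_max_right _ _)

lemma tendsto_nhds_zero_of_le_mul_convK {h f g : ℝ → ℝ} {μ a : ℝ}
    (hh0 : ∀ u, 0 ≤ u → 0 ≤ h u) (hh : IntegrableOn h (Ioi 0)) (hf : Continuous f)
    (hf0 : ∀ u, 0 ≤ f u) (hμ : 0 ≤ μ) (ha : 0 ≤ a) (hg : Tendsto g atTop (𝓝 0))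
    (hfg : ∀ t, 0 ≤ t → f t ≤ (μ + a * convK h f t) * g t) :
    Tendsto f atTop (𝓝 0) := by
  obtain ⟨M, hM⟩ := exists_forall_le_of_le_mul_convK hh0 hh hf hf0 hμ ha hg hfg
  have hM0 : 0 ≤ M := (hf0 0).trans (hM 0 le_rfl)
  have hbound : Tendsto (fun t => (μ + a * (M * l1 h)) * |g t|) atTop (𝓝 0) := by
    simpa using hg.abs.const_mul (μ + a * (M * l1 h))
  refine tendsto_of_tendsto_of_tendsto_of_le_of_le' tendsto_const_nhds hbound
    (Eventually.of_forall hf0) ?_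
  filter_upwards [eventually_ge_atTop 0] with t ht
  have hconv := convK_le_mul_l1_s6 hh0 hh hf hM0 ht fun u hu _ => hM u hu
  calc f t ≤ (μ + a * convK h f t) * g t := hfg t ht
    _ ≤ (μ + a * convK h f t) * |g t| := by
      gcongr
      · have := convK_nonneg_s6 hh0 hf0 ht; positivity
      · exact le_abs_self _
    _ ≤ (μ + a * (M * l1 h)) * |g t| := by gcongr

theorem stmt6_general
    (α : ℝ) (hα : α ∈ Set.Ioo (0:ℝ) 1)
    (h₁ h₂ h₃ h₄ : ℝ → ℝ)
    (hh₁ : KernelOK h₁) (hh₂ : KernelOK h₂) (hh₃ : KernelOK h₃) (hh₄ : KernelOK h₄)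
    (κ₂ κ₃ : ℝ)
    (hκ₂ : κ₂ = (1 - α) * l1 h₂)
    (hκ₃ : κ₃ = (1 - α) * l1 h₃)
    (ΦBA ΦAB : ℝ → ℝ) (hBA : InhibOK ΦBA) (hAB : FeedOK ΦAB)
    (μA μB : ℝ) (hμA : 0 ≤ μA) (hμB : 0 < μB)
    (hk2 : 0 < κ₂) (hk3 : 1 < κ₃) :
    ∀ lA lB, IsLinSys α h₁ h₂ h₃ h₄ ΦBA ΦAB μA μB lA lB →
      Tendsto lB atTop atTop ∧ Tendsto lA atTop (𝓝 0) := by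
  rintro lA lB ⟨hcA, hcB, hA0, hB0, heqA, heqB⟩
  obtain ⟨⟨-, hh₁0, hh₁⟩, -⟩ := hh₁
  obtain ⟨⟨-, hh₂0, hh₂⟩, -⟩ := hh₂
  obtain ⟨⟨-, hh₃0, hh₃⟩, -⟩ := hh₃
  obtain ⟨⟨-, hh₄0, -⟩, -⟩ := hh₄
  obtain ⟨hα0, hα1⟩ := hα
  have hB : Tendsto lB atTop atTop := by
    refine tendsto_atTop_of_add_mul_convK_le hh₃0 hh₃ hcB hB0 hμB (hκ₃ ▸ hk3.le)
      fun t ht => ?_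
    have hfeed := hAB.2.2.2.1 _ (mul_nonneg hα0.le (convK_nonneg_s6 hh₄0 hA0 ht))
    linarith [heqB t ht]
  have hinhib : Tendsto (fun t => (1 - α) * convK h₂ lB t) atTop atTop :=
    (tendsto_convK_atTop hh₂0 hh₂ (pos_of_mul_pos_right (hκ₂ ▸ hk2) (by linarith)) hcB hB0
      hB).const_mul_atTop (by linarith)
  exact ⟨hB, tendsto_nhds_zero_of_le_mul_convK hh₁0 hh₁ hcA hA0 hμA hα0.le
    (hBA.2.2.2.2.comp hinhib) fun t ht => (heqA t ht).le⟩

/-- Full connectivity, linear system, supercritical B: `λ^B → ∞`, `λ^A → 0`. -/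
theorem stmt6
    (α : ℝ) (hα : α ∈ Set.Ioo (0:ℝ) 1)
    (h₁ h₂ h₃ h₄ : ℝ → ℝ)
    (hh₁ : KernelOK h₁) (hh₂ : KernelOK h₂) (hh₃ : KernelOK h₃) (hh₄ : KernelOK h₄)
    (κ₁ κ₂ κ₃ κ₄ : ℝ)
    (hκ₁ : κ₁ = α * l1 h₁) (hκ₂ : κ₂ = (1 - α) * l1 h₂)
    (hκ₃ : κ₃ = (1 - α) * l1 h₃) (hκ₄ : κ₄ = α * l1 h₄)
    (ΦBA ΦAB : ℝ → ℝ) (hBA : InhibOK ΦBA) (hAB : FeedOK ΦAB)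
    (μA μB : ℝ) (hμA : 0 ≤ μA) (hμB : 0 < μB)
    (hk2 : 0 < κ₂) (hk4 : 0 < κ₄) (hk3 : 1 < κ₃) :
    ∀ lA lB, IsLinSys α h₁ h₂ h₃ h₄ ΦBA ΦAB μA μB lA lB →
      Tendsto lB atTop atTop ∧ Tendsto lA atTop (𝓝 0) :=
  stmt6_general α hα h₁ h₂ h₃ h₄ hh₁ hh₂ hh₃ hh₄ κ₂ κ₃ hκ₂ hκ₃ ΦBA ΦAB hBA hAB μA μB hμA hμB hk2 hk3
end

section
/- Suppose κ₂ > 0, κ₄ > 0 and κ₃ < 1. Then the function Φ = Ψ₂ ∘ Ψ₁ : I_{κ₁,κ₂} → [0,∞) is continuous and nonincreasing, it has a unique fixed point ℓ ∈ I_{κ₁,κ₂}, and this fixed point satisfies μ_B/(1−κ₃) ≤ ℓ. -/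
open MeasureTheory Filter Topology Set
open scoped ENNReal

/-!
`Psi1` is nonincreasing and `Psi2` nondecreasing, so `PhiMap` is continuous and nonincreasing on
the upper set `Idom`; in particular it has at most one fixed point. Since `PhiMap ≥ μB / (1 - κ₃)
≥ 0`, either `0 ∈ Idom` and `0 ≤ PhiMap 0`, or `Idom = (a, ∞)` with `κ₁ ΦBA (κ₂ a) = 1`, where
the denominator of `Psi1` vanishes and `PhiMap` blows up; either way some `x ∈ Idom` has
`x ≤ PhiMap x`. With `y = max x (PhiMap x)`, which has `PhiMap y ≤ y`, the intermediate value
theorem on `[x, y]` gives the fixed point.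
-/

lemma continuousOn_Ici_of_abs_sub_le {Φ : ℝ → ℝ} {K : ℝ} (hK : 0 ≤ K)
    (hΦ : ∀ x y, 0 ≤ x → 0 ≤ y → |Φ x - Φ y| ≤ K * |x - y|) :
    ContinuousOn Φ (Ici 0) :=
  (LipschitzOnWith.of_dist_le_mul (K := K.toNNReal) fun x hx y hy => by
    simpa only [Real.dist_eq, Real.coe_toNNReal K hK] using hΦ x y hx hy).continuousOn

lemma InhibOK.continuousOn {Φ : ℝ → ℝ} (h : InhibOK Φ) : ContinuousOn Φ (Ici 0) :=
  let ⟨_, hK, hΦ⟩ := h.1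
  continuousOn_Ici_of_abs_sub_le hK hΦ

lemma InhibOK.nonneg {Φ : ℝ → ℝ} (h : InhibOK Φ) : ∀ x, 0 ≤ x → 0 ≤ Φ x :=
  fun x hx => (h.2.2.2.1 x hx).1

lemma FeedOK.continuousOn {Φ : ℝ → ℝ} (h : FeedOK Φ) : ContinuousOn Φ (Ici 0) :=
  let ⟨_, hK, hΦ⟩ := h.1
  continuousOn_Ici_of_abs_sub_le hK hΦ

lemma ContinuousOn.comp_const_mul_Ici {Φ : ℝ → ℝ} {κ : ℝ} (hΦ : ContinuousOn Φ (Ici 0))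
    (hκ : 0 ≤ κ) : ContinuousOn (fun x => Φ (κ * x)) (Ici 0) :=
  hΦ.comp (continuous_const.mul continuous_id).continuousOn fun _ hx => mul_nonneg hκ hx

lemma exists_fixedPt_of_antitoneOn {s : Set ℝ} {f : ℝ → ℝ} (hs : IsUpperSet s)
    (hf : ContinuousOn f s) (hf' : AntitoneOn f s) {a : ℝ} (ha : a ∈ s) (haf : a ≤ f a) :
    ∃ x ∈ s, Function.IsFixedPt f x := by
  set b := max a (f a)
  have hab : a ≤ b := le_max_left _ _
  have hfb : f b ≤ b := (hf' ha (hs hab ha) hab).trans (le_max_right _ _)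
  have hsub : Icc a b ⊆ s := fun x hx => hs hx.1 ha
  obtain ⟨x, hx, hfx⟩ := intermediate_value_Icc' hab ((hf.mono hsub).sub continuousOn_id)
    (show (0 : ℝ) ∈ Icc (f b - b) (f a - a) from ⟨by linarith, by linarith⟩)
  exact ⟨x, hsub hx, sub_eq_zero.mp hfx⟩

lemma AntitoneOn.eq_of_isFixedPt {s : Set ℝ} {f : ℝ → ℝ} (hf : AntitoneOn f s) {x y : ℝ}
    (hx : x ∈ s) (hy : y ∈ s) (hfx : Function.IsFixedPt f x) (hfy : Function.IsFixedPt f y) :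
    x = y := by
  rcases le_total x y with h | h
  · exact le_antisymm h (hfy ▸ hfx ▸ hf hx hy h)
  · exact le_antisymm (hfx ▸ hfy ▸ hf hy hx h) h

section Psi

variable {μA μB κ₁ κ₂ κ₃ κ₄ : ℝ} {ΦBA ΦAB : ℝ → ℝ}

lemma isUpperSet_Idom (hκ₂ : 0 ≤ κ₂) (hanti : AntitoneOn ΦBA (Ici 0))
    (hnn : ∀ x, 0 ≤ x → 0 ≤ ΦBA x) : IsUpperSet (Idom κ₁ κ₂ ΦBA) := by
  intro x y hxy ⟨hx, hx1⟩
  have hy : 0 ≤ y := hx.trans hxy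
  have hle : ΦBA (κ₂ * y) ≤ ΦBA (κ₂ * x) :=
    hanti (mul_nonneg hκ₂ hx) (mul_nonneg hκ₂ hy) (mul_le_mul_of_nonneg_left hxy hκ₂)
  have hpos := hnn _ (mul_nonneg hκ₂ hy)
  refine ⟨hy, ?_⟩
  rcases le_total 0 κ₁ with h | h <;> nlinarith

lemma Idom_nonempty (hκ₂ : 0 < κ₂) (htend : Tendsto ΦBA atTop (𝓝 0)) :
    (Idom κ₁ κ₂ ΦBA).Nonempty := by
  have h : Tendsto (fun x => κ₁ * ΦBA (κ₂ * x)) atTop (𝓝 0) := by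
    simpa only [mul_zero, Function.comp_def, id] using
      (htend.comp (tendsto_id.const_mul_atTop hκ₂)).const_mul κ₁
  obtain ⟨x, hx1, hx⟩ := ((h.eventually_lt_const one_pos).and (eventually_ge_atTop 0)).exists
  exact ⟨x, hx, hx1⟩

lemma exists_Idom_eq_Ioi (hκ₂ : 0 ≤ κ₂) (hcont : ContinuousOn ΦBA (Ici 0))
    (hI : IsUpperSet (Idom κ₁ κ₂ ΦBA)) (hne : (Idom κ₁ κ₂ ΦBA).Nonempty)
    (h0 : 0 ∉ Idom κ₁ κ₂ ΦBA) :
    ∃ a, 0 ≤ a ∧ κ₁ * ΦBA (κ₂ * a) = 1 ∧ Idom κ₁ κ₂ ΦBA = Ioi a := by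
  set g := fun x => κ₁ * ΦBA (κ₂ * x)
  have hg : ContinuousOn g (Ici 0) := continuousOn_const.mul (hcont.comp_const_mul_Ici hκ₂)
  set J := Ici 0 ∩ g ⁻¹' Ici 1
  have hJI : ∀ x ∈ J, x ∉ Idom κ₁ κ₂ ΦBA := fun x hx hxI => (not_lt.mpr hx.2) hxI.2
  obtain ⟨c, hc⟩ := hne
  have hJc : BddAbove J := ⟨c, fun x hx => le_of_not_gt fun h => hJI x hx (hI h.le hc)⟩
  have h0J : (0 : ℝ) ∈ J := ⟨self_mem_Ici, not_lt.mp fun h => h0 ⟨le_rfl, h⟩⟩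
  have ha : sSup J ∈ J :=
    (hg.preimage_isClosed_of_isClosed isClosed_Ici isClosed_Ici).csSup_mem ⟨0, h0J⟩ hJc
  set a := sSup J
  have ha0 : 0 ≤ a := ha.1
  have hIa : Idom κ₁ κ₂ ΦBA = Ioi a := by
    ext x
    refine ⟨fun hx => lt_of_not_ge fun h => hJI a ha (hI h hx), fun hx => ?_⟩
    refine ⟨ha0.trans hx.le, lt_of_not_ge fun h => ?_⟩
    exact (not_le.mpr hx) (le_csSup hJc ⟨ha0.trans hx.le, h⟩)
  refine ⟨a, ha0, le_antisymm ?_ ha.2, hIa⟩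
  have hga : Tendsto g (𝓝[>] a) (𝓝 (g a)) := ((hg a ha0).mono (Ioi_subset_Ici ha0)).tendsto
  refine le_of_tendsto hga ?_
  filter_upwards [self_mem_nhdsWithin] with x hx
  exact (hIa ▸ hx : x ∈ Idom κ₁ κ₂ ΦBA).2.le

lemma psi1_nonneg (hμA : 0 ≤ μA) (hκ₂ : 0 ≤ κ₂) (hnn : ∀ x, 0 ≤ x → 0 ≤ ΦBA x) {x : ℝ}
    (hx : x ∈ Idom κ₁ κ₂ ΦBA) : 0 ≤ Psi1 μA κ₁ κ₂ ΦBA x :=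
  div_nonneg (mul_nonneg hμA (hnn _ (mul_nonneg hκ₂ hx.1))) (sub_nonneg.mpr hx.2.le)

lemma continuousOn_psi1 (hκ₂ : 0 ≤ κ₂) (hcont : ContinuousOn ΦBA (Ici 0)) :
    ContinuousOn (Psi1 μA κ₁ κ₂ ΦBA) (Idom κ₁ κ₂ ΦBA) := by
  have hp : ContinuousOn (fun x => ΦBA (κ₂ * x)) (Idom κ₁ κ₂ ΦBA) :=
    (hcont.comp_const_mul_Ici hκ₂).mono fun _ hx => hx.1
  exact (continuousOn_const.mul hp).div (continuousOn_const.sub (continuousOn_const.mul hp))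
    fun x hx => (sub_pos.mpr hx.2).ne'

-- `t ↦ t / (1 - κ₁ t)` is increasing wherever `1 - κ₁ t > 0`, whatever the sign of `κ₁`.
lemma antitoneOn_psi1 (hμA : 0 ≤ μA) (hκ₂ : 0 ≤ κ₂) (hanti : AntitoneOn ΦBA (Ici 0)) :
    AntitoneOn (Psi1 μA κ₁ κ₂ ΦBA) (Idom κ₁ κ₂ ΦBA) := by
  intro x hx y hy hxy
  have hle : ΦBA (κ₂ * y) ≤ ΦBA (κ₂ * x) :=
    hanti (mul_nonneg hκ₂ hx.1) (mul_nonneg hκ₂ hy.1) (mul_le_mul_of_nonneg_left hxy hκ₂)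
  rw [Psi1, Psi1, div_le_div_iff₀ (sub_pos.mpr hy.2) (sub_pos.mpr hx.2)]
  nlinarith [mul_le_mul_of_nonneg_left hle hμA]

lemma tendsto_psi1_nhdsGT {a : ℝ} (hμA : 0 < μA)
    (hcont : ContinuousWithinAt (fun x => ΦBA (κ₂ * x)) (Ioi a) a) (hnn : 0 ≤ ΦBA (κ₂ * a))
    (hcrit : κ₁ * ΦBA (κ₂ * a) = 1) (hI : Ioi a ⊆ Idom κ₁ κ₂ ΦBA) :
    Tendsto (Psi1 μA κ₁ κ₂ ΦBA) (𝓝[>] a) atTop := by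
  have hpa : 0 < ΦBA (κ₂ * a) := lt_of_le_of_ne hnn fun h => by simp [← h] at hcrit
  have hden : Tendsto (fun x => 1 - κ₁ * ΦBA (κ₂ * x)) (𝓝[>] a) (𝓝[>] 0) := by
    refine tendsto_nhdsWithin_iff.mpr ⟨?_, ?_⟩
    · simpa only [hcrit, sub_self] using (hcont.tendsto.const_mul κ₁).const_sub 1
    · filter_upwards [self_mem_nhdsWithin] with x hx using sub_pos.mpr (hI hx).2
  exact ((hcont.tendsto.const_mul μA).pos_mul_atTop (mul_pos hμA hpa)
    hden.inv_tendsto_nhdsGT_zero).congr fun _ => (div_eq_mul_inv _ _).symm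

lemma continuousOn_psi2 (hκ₄ : 0 ≤ κ₄) (hcont : ContinuousOn ΦAB (Ici 0)) :
    ContinuousOn (Psi2 μB κ₃ κ₄ ΦAB) (Ici 0) :=
  (continuousOn_const.add (hcont.comp_const_mul_Ici hκ₄)).div_const _

lemma monotoneOn_psi2 (hκ₃ : κ₃ < 1) (hκ₄ : 0 ≤ κ₄) (hmono : MonotoneOn ΦAB (Ici 0)) :
    MonotoneOn (Psi2 μB κ₃ κ₄ ΦAB) (Ici 0) := fun _ hx _ hy hxy =>
  div_le_div_of_nonneg_right ((add_le_add_iff_left μB).mpr (hmono (mul_nonneg hκ₄ hx)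
    (mul_nonneg hκ₄ hy) (mul_le_mul_of_nonneg_left hxy hκ₄))) (sub_pos.mpr hκ₃).le

lemma div_le_psi2 (hκ₃ : κ₃ < 1) (hκ₄ : 0 ≤ κ₄) (hnn : ∀ x, 0 ≤ x → 0 ≤ ΦAB x) {x : ℝ}
    (hx : 0 ≤ x) : μB / (1 - κ₃) ≤ Psi2 μB κ₃ κ₄ ΦAB x :=
  div_le_div_of_nonneg_right (le_add_of_nonneg_right (hnn _ (mul_nonneg hκ₄ hx)))
    (sub_pos.mpr hκ₃).le

lemma tendsto_psi2_atTop (hκ₃ : κ₃ < 1) (hκ₄ : 0 < κ₄) (htend : Tendsto ΦAB atTop atTop) :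
    Tendsto (Psi2 μB κ₃ κ₄ ΦAB) atTop atTop :=
  (tendsto_atTop_add_const_left _ μB (htend.comp (tendsto_id.const_mul_atTop hκ₄))).atTop_div_const
    (sub_pos.mpr hκ₃)

end Psi

section PhiMap

variable {μA μB κ₁ κ₂ κ₃ κ₄ : ℝ} {ΦBA ΦAB : ℝ → ℝ}

lemma continuousOn_phiMap (hμA : 0 ≤ μA) (hκ₂ : 0 ≤ κ₂) (hκ₄ : 0 ≤ κ₄) (hBA : InhibOK ΦBA)
    (hAB : FeedOK ΦAB) :
    ContinuousOn (PhiMap μA μB κ₁ κ₂ κ₃ κ₄ ΦBA ΦAB) (Idom κ₁ κ₂ ΦBA) :=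
  (continuousOn_psi2 hκ₄ hAB.continuousOn).comp (continuousOn_psi1 hκ₂ hBA.continuousOn)
    fun _ hx => psi1_nonneg hμA hκ₂ hBA.nonneg hx

lemma antitoneOn_phiMap (hμA : 0 ≤ μA) (hκ₂ : 0 ≤ κ₂) (hκ₃ : κ₃ < 1) (hκ₄ : 0 ≤ κ₄)
    (hBA : InhibOK ΦBA) (hAB : FeedOK ΦAB) :
    AntitoneOn (PhiMap μA μB κ₁ κ₂ κ₃ κ₄ ΦBA ΦAB) (Idom κ₁ κ₂ ΦBA) := fun _ hx _ hy hxy =>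
  monotoneOn_psi2 hκ₃ hκ₄ hAB.2.1 (psi1_nonneg hμA hκ₂ hBA.nonneg hy)
    (psi1_nonneg hμA hκ₂ hBA.nonneg hx) (antitoneOn_psi1 hμA hκ₂ hBA.2.1 hx hy hxy)

lemma div_le_phiMap (hμA : 0 ≤ μA) (hκ₂ : 0 ≤ κ₂) (hκ₃ : κ₃ < 1) (hκ₄ : 0 ≤ κ₄)
    (hBA : InhibOK ΦBA) (hAB : FeedOK ΦAB) {x : ℝ} (hx : x ∈ Idom κ₁ κ₂ ΦBA) :
    μB / (1 - κ₃) ≤ PhiMap μA μB κ₁ κ₂ κ₃ κ₄ ΦBA ΦAB x :=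
  div_le_psi2 hκ₃ hκ₄ hAB.2.2.2.1 (psi1_nonneg hμA hκ₂ hBA.nonneg hx)

/-- If `0 ∈ Idom`, take `x = 0`; otherwise `Idom = (a, ∞)` and `PhiMap` blows up at `a`. -/
lemma exists_le_phiMap (hμA : 0 < μA) (hμB : 0 ≤ μB) (hκ₂ : 0 < κ₂) (hκ₃ : κ₃ < 1)
    (hκ₄ : 0 < κ₄) (hBA : InhibOK ΦBA) (hAB : FeedOK ΦAB) :
    ∃ x ∈ Idom κ₁ κ₂ ΦBA, x ≤ PhiMap μA μB κ₁ κ₂ κ₃ κ₄ ΦBA ΦAB x := by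
  by_cases h0 : 0 ∈ Idom κ₁ κ₂ ΦBA
  · exact ⟨0, h0, (div_nonneg hμB (sub_pos.mpr hκ₃).le).trans
      (div_le_phiMap hμA.le hκ₂.le hκ₃ hκ₄.le hBA hAB h0)⟩
  obtain ⟨a, ha0, hcrit, hIa⟩ := exists_Idom_eq_Ioi hκ₂.le hBA.continuousOn
    (isUpperSet_Idom hκ₂.le hBA.2.1 hBA.nonneg) (Idom_nonempty hκ₂ hBA.2.2.2.2) h0
  have hp : ContinuousWithinAt (fun x => ΦBA (κ₂ * x)) (Ioi a) a :=
    ((hBA.continuousOn.comp_const_mul_Ici hκ₂.le).continuousWithinAt ha0).mono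
      (Ioi_subset_Ici ha0)
  have hΦ : Tendsto (PhiMap μA μB κ₁ κ₂ κ₃ κ₄ ΦBA ΦAB) (𝓝[>] a) atTop :=
    (tendsto_psi2_atTop hκ₃ hκ₄ hAB.2.2.2.2).comp <| tendsto_psi1_nhdsGT hμA hp
      (hBA.nonneg _ (mul_nonneg hκ₂.le ha0)) hcrit hIa.ge
  obtain ⟨x, hxΦ, hx⟩ := ((hΦ.eventually_gt_atTop (a + 1)).and
    ((eventually_lt_nhds (lt_add_one a)).filter_mono nhdsWithin_le_nhds)).and
    self_mem_nhdsWithin |>.exists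
  exact ⟨x, hIa ▸ hx, by linarith [hxΦ.1, hxΦ.2]⟩

end PhiMap

theorem stmt7_general
    (κ₁ κ₂ κ₃ κ₄ : ℝ)
    (ΦBA ΦAB : ℝ → ℝ) (hBA : InhibOK ΦBA) (hAB : FeedOK ΦAB)
    (μA μB : ℝ) (hμA : 0 < μA) (hμB : 0 ≤ μB)
    (hk2 : 0 < κ₂) (hk4 : 0 < κ₄) (hk3 : κ₃ < 1) :
    ContinuousOn (PhiMap μA μB κ₁ κ₂ κ₃ κ₄ ΦBA ΦAB) (Idom κ₁ κ₂ ΦBA) ∧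
    AntitoneOn (PhiMap μA μB κ₁ κ₂ κ₃ κ₄ ΦBA ΦAB) (Idom κ₁ κ₂ ΦBA) ∧
    ∃ ℓ ∈ Idom κ₁ κ₂ ΦBA,
      PhiMap μA μB κ₁ κ₂ κ₃ κ₄ ΦBA ΦAB ℓ = ℓ ∧
      μB / (1 - κ₃) ≤ ℓ ∧
      ∀ x ∈ Idom κ₁ κ₂ ΦBA, PhiMap μA μB κ₁ κ₂ κ₃ κ₄ ΦBA ΦAB x = x → x = ℓ := by
  have hcont := continuousOn_phiMap (μB := μB) (κ₁ := κ₁) (κ₃ := κ₃) hμA.le hk2.le hk4.le hBA hAB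
  have hanti := antitoneOn_phiMap (μB := μB) (κ₁ := κ₁) hμA.le hk2.le hk3 hk4.le hBA hAB
  obtain ⟨a, haI, ha⟩ := exists_le_phiMap hμA hμB hk2 hk3 hk4 hBA hAB
  obtain ⟨ℓ, hℓI, hℓ⟩ := exists_fixedPt_of_antitoneOn
    (isUpperSet_Idom hk2.le hBA.2.1 hBA.nonneg) hcont hanti haI ha
  refine ⟨hcont, hanti, ℓ, hℓI, hℓ, hℓ ▸ div_le_phiMap hμA.le hk2.le hk3 hk4.le hBA hAB hℓI, ?_⟩
  exact fun x hx hx' => hanti.eq_of_isFixedPt hx hℓI hx' hℓ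

/-- The fixed-point map `Φ = Ψ₂ ∘ Ψ₁` is continuous, nonincreasing, and has a
unique fixed point `ℓ` in `I_{κ₁,κ₂}`, which satisfies `μ_B/(1-κ₃) ≤ ℓ`. -/
theorem stmt7
    (α : ℝ) (hα : α ∈ Set.Ioo (0:ℝ) 1)
    (h₁ h₂ h₃ h₄ : ℝ → ℝ)
    (hh₁ : KernelL1 h₁) (hh₂ : KernelL1 h₂) (hh₃ : KernelL1 h₃) (hh₄ : KernelL1 h₄)
    (κ₁ κ₂ κ₃ κ₄ : ℝ)
    (hκ₁ : κ₁ = α * l1 h₁) (hκ₂ : κ₂ = (1 - α) * l1 h₂)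
    (hκ₃ : κ₃ = (1 - α) * l1 h₃) (hκ₄ : κ₄ = α * l1 h₄)
    (ΦBA ΦAB : ℝ → ℝ) (hBA : InhibOK ΦBA) (hAB : FeedOK ΦAB)
    (μA μB : ℝ) (hμA : 0 < μA) (hμB : 0 ≤ μB)
    (hk2 : 0 < κ₂) (hk4 : 0 < κ₄) (hk3 : κ₃ < 1) :
    ContinuousOn (PhiMap μA μB κ₁ κ₂ κ₃ κ₄ ΦBA ΦAB) (Idom κ₁ κ₂ ΦBA) ∧
    AntitoneOn (PhiMap μA μB κ₁ κ₂ κ₃ κ₄ ΦBA ΦAB) (Idom κ₁ κ₂ ΦBA) ∧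
    ∃ ℓ ∈ Idom κ₁ κ₂ ΦBA,
      PhiMap μA μB κ₁ κ₂ κ₃ κ₄ ΦBA ΦAB ℓ = ℓ ∧
      μB / (1 - κ₃) ≤ ℓ ∧
      ∀ x ∈ Idom κ₁ κ₂ ΦBA, PhiMap μA μB κ₁ κ₂ κ₃ κ₄ ΦBA ΦAB x = x → x = ℓ :=
  stmt7_general κ₁ κ₂ κ₃ κ₄ ΦBA ΦAB hBA hAB μA μB hμA hμB hk2 hk4 hk3
end
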